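/- arXiv:2605.09069 — 6 statements merged into one kernel-verified Lean document; each statement's English description precedes it below -/
import Mathlib

section
/- Let N ≥ 2 be an integer, α ∈ (0,2) a real constant, and Ω ⊆ ℝ^N a bounded open set with 0 ∈ Ω. Then for every smooth function u : ℝ^N → ℝ with compact support contained in Ω, the Hardy-type inequality (N − 2 + α)² ∫_Ω |x|^{α−2} u(x)² dx ≤ 4 ∫_Ω |x|^α ‖∇u(x)‖² dx holds. -/
open MeasureTheory

theorem my_div_thm {N : ℕ} (φ : EuclideanSpace ℝ (Fin N) → ℝ)
    (hφ : ContDiff ℝ (⊤ : ℕ∞) φ) (hc : HasCompactSupport φ) :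
    ∫ x : EuclideanSpace ℝ (Fin N), fderiv ℝ φ x x =
      -(N : ℝ) * ∫ x : EuclideanSpace ℝ (Fin N), φ x := by
  have hφ1 : Differentiable ℝ φ := hφ.differentiable (by simp)
  have hfc : Continuous (fderiv ℝ φ) := hφ.continuous_fderiv (by simp)
  have hφcont : Continuous φ := hφ.continuous
  -- integrability of each coordinate term
  have hint : ∀ i : Fin N, Integrable
      (fun x : EuclideanSpace ℝ (Fin N) => fderiv ℝ φ x (EuclideanSpace.single i 1) * x i) := by
    intro i
    apply Continuous.integrable_of_hasCompactSupport
    · exact ((ContinuousLinearMap.apply ℝ ℝ (EuclideanSpace.single i 1)).continuous.comp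
        hfc).mul (EuclideanSpace.proj (𝕜 := ℝ) i).continuous
    · apply hc.mono'
      intro x hx
      have : fderiv ℝ φ x ≠ 0 := by
        intro h
        apply hx
        simp [h]
      exact support_fderiv_subset ℝ this
  have key : ∀ i : Fin N,
      ∫ x : EuclideanSpace ℝ (Fin N), fderiv ℝ φ x (EuclideanSpace.single i 1) * x i
        = - ∫ x : EuclideanSpace ℝ (Fin N), φ x := by
    intro i
    have hg : Differentiable ℝ (fun x : EuclideanSpace ℝ (Fin N) => x i) :=
      (EuclideanSpace.proj (𝕜 := ℝ) i).differentiable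
    have hgd : ∀ x : EuclideanSpace ℝ (Fin N),
        fderiv ℝ (fun x : EuclideanSpace ℝ (Fin N) => x i) x (EuclideanSpace.single i 1) = 1 := by
      intro x
      have : fderiv ℝ (fun x : EuclideanSpace ℝ (Fin N) => x i) x
          = EuclideanSpace.proj (𝕜 := ℝ) i := by
        exact (EuclideanSpace.proj (𝕜 := ℝ) i).fderiv
      rw [this]
      simp [EuclideanSpace.single_apply]
    have h2 : Integrable (fun x : EuclideanSpace ℝ (Fin N) =>
        φ x * fderiv ℝ (fun x : EuclideanSpace ℝ (Fin N) => x i) x (EuclideanSpace.single i 1)) := by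
      simp only [hgd, mul_one]
      exact hφcont.integrable_of_hasCompactSupport hc
    have h3 : Integrable (fun x : EuclideanSpace ℝ (Fin N) => φ x * x i) := by
      apply Continuous.integrable_of_hasCompactSupport
      · exact hφcont.mul (EuclideanSpace.proj (𝕜 := ℝ) i).continuous
      · apply hc.mono'
        intro x hx
        apply subset_tsupport φ
        simp only [Function.mem_support] at hx ⊢
        intro h; apply hx; rw [h]; ring
    have := integral_mul_fderiv_eq_neg_fderiv_mul_of_integrable (hint i) h2 h3 (fun x _ => hφ1 x) (fun x _ => hg x)
    simp only [hgd, mul_one] at this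
    linarith
  have hrep : ∀ x : EuclideanSpace ℝ (Fin N),
      fderiv ℝ φ x x = ∑ i : Fin N, fderiv ℝ φ x (EuclideanSpace.single i 1) * x i := by
    intro x
    have hx : ∑ i : Fin N, x i • EuclideanSpace.single i (1 : ℝ) = x := by
      simpa [EuclideanSpace.basisFun_apply, EuclideanSpace.basisFun_repr] using
        (EuclideanSpace.basisFun (Fin N) ℝ).sum_repr x
    calc fderiv ℝ φ x x = fderiv ℝ φ x (∑ i : Fin N, x i • EuclideanSpace.single i (1 : ℝ)) := by
          rw [hx]
      _ = ∑ i : Fin N, fderiv ℝ φ x (EuclideanSpace.single i 1) * x i := by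
          rw [map_sum]
          exact Finset.sum_congr rfl (fun i _ => by
            rw [ContinuousLinearMap.map_smul, smul_eq_mul, mul_comm])
  calc ∫ x : EuclideanSpace ℝ (Fin N), fderiv ℝ φ x x
      = ∫ x : EuclideanSpace ℝ (Fin N), ∑ i : Fin N,
          fderiv ℝ φ x (EuclideanSpace.single i 1) * x i := by
        exact integral_congr_ae (Filter.Eventually.of_forall hrep)
    _ = ∑ i : Fin N, ∫ x : EuclideanSpace ℝ (Fin N),
          fderiv ℝ φ x (EuclideanSpace.single i 1) * x i :=
        integral_finset_sum _ (fun i _ => hint i)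
    _ = ∑ i : Fin N, (- ∫ x : EuclideanSpace ℝ (Fin N), φ x) := by
        exact Finset.sum_congr rfl (fun i _ => key i)
    _ = -(N : ℝ) * ∫ x : EuclideanSpace ℝ (Fin N), φ x := by
        simp [Finset.sum_const, Finset.card_univ]

theorem real_rpow_add_le {a b p : ℝ} (ha : 0 ≤ a) (hb : 0 ≤ b) (hp0 : 0 ≤ p) (hp1 : p ≤ 1) :
    (a + b) ^ p ≤ a ^ p + b ^ p := by
  lift a to NNReal using ha
  lift b to NNReal using hb
  have := NNReal.rpow_add_le_add_rpow a b hp0 hp1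
  exact_mod_cast this

set_option maxHeartbeats 1000000 in
theorem hardy_step {N : ℕ} (hN : 2 ≤ N) {α : ℝ} (hα : α ∈ Set.Ioo (0:ℝ) 2)
    (u : EuclideanSpace ℝ (Fin N) → ℝ) (hu : ContDiff ℝ (⊤ : ℕ∞) u) (hcpt : HasCompactSupport u)
    {ε : ℝ} (hε : 0 < ε) :
    ((N:ℝ) - 2 + α)^2 * ∫ x : EuclideanSpace ℝ (Fin N), (‖x‖^2 + ε) ^ ((α-2)/2) * (u x)^2 ≤
      4 * (∫ x : EuclideanSpace ℝ (Fin N), ‖x‖ ^ α * ‖gradient u x‖^2)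
        + 4 * ε ^ (α/2) * ∫ x : EuclideanSpace ℝ (Fin N), ‖gradient u x‖^2 := by
  obtain ⟨hα0, hα2⟩ := hα
  have hN' : (2:ℝ) ≤ (N:ℝ) := by exact_mod_cast hN
  set c : ℝ := ((N:ℝ) - 2 + α)/2 with hcdef
  have hcpos : 0 < c := by simp only [hcdef]; linarith
  set S : EuclideanSpace ℝ (Fin N) → ℝ := fun x => ‖x‖^2 + ε with hSdef
  have hS : ∀ x, 0 < S x := fun x => by positivity
  -- continuity facts
  have hScont : Continuous S := (continuous_norm.pow 2).add continuous_const
  have hSrpow : ∀ β : ℝ, Continuous fun x => S x ^ β := by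
    intro β
    rw [continuous_iff_continuousAt]
    intro x
    exact (Real.continuousAt_rpow_const _ _ (Or.inl (hS x).ne')).comp hScont.continuousAt
  have hgrad : ∀ x y, fderiv ℝ u x y = inner ℝ (gradient u x) y := by
    intro x y
    exact (InnerProductSpace.toDual_symm_apply).symm
  have hGcont : Continuous (gradient u) := by
    have : Continuous (fderiv ℝ u) := hu.continuous_fderiv (by simp)
    exact (InnerProductSpace.toDual ℝ _).symm.continuous.comp this
  have hGzero : ∀ x, x ∉ tsupport u → gradient u x = 0 := by
    intro x hx
    have : fderiv ℝ u x = 0 := by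
      by_contra h
      exact hx (support_fderiv_subset ℝ (Function.mem_support.mpr h))
    simp only [gradient, this, map_zero]
  have hucont : Continuous u := hu.continuous
  have hdcont : Continuous fun x : EuclideanSpace ℝ (Fin N) => fderiv ℝ u x x :=
    (hu.continuous_fderiv (by simp)).clm_apply continuous_id
  have huzero : ∀ x, x ∉ tsupport u → u x = 0 := fun x hx => image_eq_zero_of_notMem_tsupport hx
  -- integrability helper
  have hci : ∀ f : EuclideanSpace ℝ (Fin N) → ℝ, Continuous f →
      (∀ x, x ∉ tsupport u → f x = 0) → Integrable f := by
    intro f hf h0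
    apply hf.integrable_of_hasCompactSupport
    apply hcpt.mono'
    intro x hx
    by_contra h
    exact hx (h0 x h)
  -- the four integrands
  set A : EuclideanSpace ℝ (Fin N) → ℝ := fun x => S x ^ (α/2) * ‖gradient u x‖^2 with hAdef
  set B : EuclideanSpace ℝ (Fin N) → ℝ :=
    fun x => S x ^ ((α-2)/2) * (u x * fderiv ℝ u x x) with hBdef
  set C : EuclideanSpace ℝ (Fin N) → ℝ :=
    fun x => S x ^ ((α-4)/2) * (‖x‖^2 * (u x)^2) with hCdef
  set D : EuclideanSpace ℝ (Fin N) → ℝ := fun x => S x ^ ((α-2)/2) * (u x)^2 with hDdef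
  have hA : Integrable A := hci A ((hSrpow _).mul ((hGcont.norm.pow 2)))
    (fun x hx => by simp [hAdef, hGzero x hx])
  have hB : Integrable B := hci B ((hSrpow _).mul (hucont.mul hdcont))
    (fun x hx => by simp [hBdef, huzero x hx])
  have hC : Integrable C := hci C ((hSrpow _).mul ((continuous_norm.pow 2).mul (hucont.pow 2)))
    (fun x hx => by simp [hCdef, huzero x hx])
  have hD : Integrable D := hci D ((hSrpow _).mul (hucont.pow 2))
    (fun x hx => by simp [hDdef, huzero x hx])
  have hGsq : Integrable (fun x : EuclideanSpace ℝ (Fin N) => ‖gradient u x‖^2) :=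
    hci _ (hGcont.norm.pow 2) (fun x hx => by simp [hGzero x hx])
  have hRn : Integrable (fun x : EuclideanSpace ℝ (Fin N) => ‖x‖ ^ α * ‖gradient u x‖^2) := by
    refine hci _ (Continuous.mul ?_ (hGcont.norm.pow 2)) (fun x hx => by simp [hGzero x hx])
    rw [continuous_iff_continuousAt]
    intro x
    exact (Real.continuousAt_rpow_const _ _ (Or.inr hα0.le)).comp continuous_norm.continuousAt
  set I := ∫ x, A x with hIdef
  set J := ∫ x, B x with hJdef
  set K := ∫ x, C x with hKdef
  set Dint := ∫ x, D x with hDintdef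
  -- exponent juggling
  have e1 : ∀ x, S x ^ (α/2) = S x ^ ((α-4)/2) * (S x)^2 := by
    intro x
    rw [show (α/2) = (α-4)/2 + (2:ℕ) by push_cast; ring, Real.rpow_add (hS x), Real.rpow_natCast]
  have e2 : ∀ x, S x ^ ((α-2)/2) = S x ^ ((α-4)/2) * S x := by
    intro x
    rw [show ((α-2)/2) = (α-4)/2 + 1 by ring, Real.rpow_add (hS x), Real.rpow_one]
  -- pointwise positivity
  have hpoint : ∀ x, 0 ≤ A x + (2*c) * B x + c^2 * C x := by
    intro x
    have hd : |fderiv ℝ u x x| ≤ ‖gradient u x‖ * ‖x‖ := by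
      rw [hgrad x x]
      exact abs_real_inner_le_norm _ _
    have habs : |u x * fderiv ℝ u x x| ≤ |u x| * (‖gradient u x‖ * ‖x‖) := by
      rw [abs_mul]
      exact mul_le_mul_of_nonneg_left hd (abs_nonneg _)
    have hneg : -(|u x * fderiv ℝ u x x|) ≤ u x * fderiv ℝ u x x := neg_abs_le _
    have expand : A x + (2*c) * B x + c^2 * C x = S x ^ ((α-4)/2) *
        ((S x)^2 * ‖gradient u x‖^2 + 2*c*(S x * (u x * fderiv ℝ u x x))
          + c^2 * (‖x‖^2 * (u x)^2)) := by
      simp only [hAdef, hBdef, hCdef, e1, e2]; ring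
    rw [expand]
    apply mul_nonneg (Real.rpow_nonneg (hS x).le _)
    have h2cS : (0:ℝ) ≤ 2*c*S x := by positivity
    have step1a := mul_le_mul_of_nonneg_left hneg h2cS
    have step1b := mul_le_mul_of_nonneg_left habs h2cS
    have step2 := sq_nonneg (S x * ‖gradient u x‖ - c * (|u x| * ‖x‖))
    have habs3 : c^2*(‖x‖^2*|u x|^2) = c^2*(‖x‖^2*(u x)^2) := by rw [sq_abs]
    nlinarith [step1a, step1b, step2, habs3]
  -- integral positivity
  have hIpos : 0 ≤ I + (2*c)*J + c^2*K := by
    have : ∫ x, (A x + (2*c) * B x + c^2 * C x) = I + (2*c)*J + c^2*K := by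
      have hB' : Integrable (fun x : EuclideanSpace ℝ (Fin N) => (2*c) * B x) :=
        hB.const_mul (2*c)
      have hC' : Integrable (fun x : EuclideanSpace ℝ (Fin N) => c^2 * C x) :=
        hC.const_mul (c^2)
      have hAB : Integrable (fun x : EuclideanSpace ℝ (Fin N) => A x + (2*c) * B x) :=
        hA.add hB'
      rw [integral_add hAB hC', integral_add hA hB', integral_const_mul, integral_const_mul]
    rw [← this]
    exact integral_nonneg hpoint
  -- C ≤ D pointwise, K ≤ Dint
  have hKD : K ≤ Dint := by
    apply integral_mono hC hD
    intro x
    simp only [hCdef, hDdef, e2]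
    have h1 : ‖x‖^2 ≤ S x := by
      show ‖x‖^2 ≤ ‖x‖^2 + ε
      linarith
    nlinarith [h1, mul_nonneg (Real.rpow_nonneg (hS x).le ((α-4)/2)) (sq_nonneg (u x))]
  -- divergence identity
  have hdiv : (α-2)*K + 2*J = -(N:ℝ)*Dint := by
    have hVsmooth : ContDiff ℝ (⊤ : ℕ∞) (fun x : EuclideanSpace ℝ (Fin N) => S x ^ ((α-2)/2)) := by
      rw [contDiff_iff_contDiffAt]
      intro x
      exact (Real.contDiffAt_rpow_const_of_ne (hS x).ne').comp x
        (((contDiff_norm_sq (𝕜 := ℝ)).add contDiff_const).contDiffAt)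
    have hDsmooth : ContDiff ℝ (⊤ : ℕ∞) D := by
      rw [hDdef]
      exact hVsmooth.mul (hu.pow 2)
    have hDc : HasCompactSupport D := by
      apply hcpt.mono'
      intro x hx
      by_contra h
      exact hx (by simp [hDdef, huzero x h])
    have hDφ : ∀ x, fderiv ℝ D x x = (α-2) * C x + 2 * B x := by
      intro x
      have hu' : HasFDerivAt u (fderiv ℝ u x) x := (hu.differentiable (by simp) x).hasFDerivAt
      have h2 : HasFDerivAt (fun y => u y * u y)
          (u x • fderiv ℝ u x + u x • fderiv ℝ u x) x := hu'.mul hu'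
      have h1 : HasFDerivAt (fun y : EuclideanSpace ℝ (Fin N) => S y ^ ((α-2)/2))
          ((((α-2)/2) * S x ^ ((α-2)/2 - 1)) • (2 • (innerSL ℝ x))) x := by
        have hq : HasFDerivAt S (2 • (innerSL ℝ x)) x :=
          ((hasStrictFDerivAt_norm_sq x).hasFDerivAt).add_const ε
        exact hq.rpow_const (Or.inl (hS x).ne')
      have h0 : HasFDerivAt D
          ((S x ^ ((α-2)/2)) • (u x • fderiv ℝ u x + u x • fderiv ℝ u x)
            + (u x * u x) • ((((α-2)/2) * S x ^ ((α-2)/2 - 1)) • (2 • (innerSL ℝ x)))) x := by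
        rw [hDdef]
        simp only [pow_two]
        exact h1.mul h2
      rw [h0.fderiv]
      simp only [ContinuousLinearMap.add_apply, ContinuousLinearMap.smul_apply,
        innerSL_apply_apply, real_inner_self_eq_norm_sq, smul_eq_mul, nsmul_eq_mul, Nat.cast_ofNat]
      rw [show ((α-2)/2 - 1) = (α-4)/2 from by ring]
      simp only [hBdef, hCdef]
      ring
    have hthm := my_div_thm D hDsmooth hDc
    have hL : ∫ x : EuclideanSpace ℝ (Fin N), fderiv ℝ D x x = (α-2)*K + 2*J := by
      rw [show (fun x : EuclideanSpace ℝ (Fin N) => fderiv ℝ D x x)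
          = fun x => (α-2) * C x + 2 * B x from funext hDφ]
      have hC' : Integrable (fun x : EuclideanSpace ℝ (Fin N) => (α-2) * C x) :=
        hC.const_mul (α-2)
      have hB' : Integrable (fun x : EuclideanSpace ℝ (Fin N) => 2 * B x) :=
        hB.const_mul 2
      rw [integral_add hC' hB', integral_const_mul, integral_const_mul]
    rw [hL] at hthm
    exact hthm
  -- combine
  have hI_lower : c^2 * Dint ≤ I := by
    have e3 : c*((α-2)*K + 2*J) = c*(-(N:ℝ)*Dint) := by rw [hdiv]
    have h3 : c*(α-2-c)*Dint ≤ c*(α-2-c)*K := by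
      apply mul_le_mul_of_nonpos_left hKD
      nlinarith
    have h4 : c*(N:ℝ)*Dint + c*α*Dint - 2*c*Dint - c^2*Dint = c^2*Dint := by
      rw [hcdef]; ring
    nlinarith [hIpos, e3, h3, h4]
  -- final bound on I
  have hI_upper : I ≤ (∫ x : EuclideanSpace ℝ (Fin N), ‖x‖ ^ α * ‖gradient u x‖^2)
      + ε^(α/2) * ∫ x : EuclideanSpace ℝ (Fin N), ‖gradient u x‖^2 := by
    have hpt : ∀ x, A x ≤ ‖x‖ ^ α * ‖gradient u x‖^2 + ε^(α/2) * ‖gradient u x‖^2 := by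
      intro x
      have hw : S x ^ (α/2) ≤ ‖x‖ ^ α + ε^(α/2) := by
        have := real_rpow_add_le (sq_nonneg ‖x‖) hε.le (by linarith : (0:ℝ) ≤ α/2)
          (by linarith : α/2 ≤ 1)
        have hn : (‖x‖^2 : ℝ) ^ (α/2) = ‖x‖ ^ α := by
          rw [← Real.rpow_natCast ‖x‖ 2, ← Real.rpow_mul (norm_nonneg x)]
          norm_num
          rw [show (2:ℝ)*(α/2) = α by ring]
        simpa [hSdef, hn] using this
      simp only [hAdef]
      have := sq_nonneg ‖gradient u x‖
      nlinarith
    have hint2 : Integrable (fun x : EuclideanSpace ℝ (Fin N) =>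
        ‖x‖ ^ α * ‖gradient u x‖^2 + ε^(α/2) * ‖gradient u x‖^2) :=
      hRn.add (hGsq.const_mul _)
    have := integral_mono hA hint2 hpt
    rwa [integral_add hRn (hGsq.const_mul _), integral_const_mul] at this
  calc ((N:ℝ) - 2 + α)^2 * Dint = 4 * (c^2 * Dint) := by rw [hcdef]; ring
    _ ≤ 4 * I := by linarith
    _ ≤ 4 * ((∫ x : EuclideanSpace ℝ (Fin N), ‖x‖ ^ α * ‖gradient u x‖^2)
        + ε^(α/2) * ∫ x : EuclideanSpace ℝ (Fin N), ‖gradient u x‖^2) := by linarith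
    _ = 4 * (∫ x : EuclideanSpace ℝ (Fin N), ‖x‖ ^ α * ‖gradient u x‖^2)
        + 4 * ε ^ (α/2) * ∫ x : EuclideanSpace ℝ (Fin N), ‖gradient u x‖^2 := by ring


open MeasureTheory

set_option maxHeartbeats 1000000 in
/-- Hardy-type inequality for the weight `|x|^α`, `α ∈ (0,2)`, on a bounded open
set `Ω ⊆ ℝ^N` containing the origin, for smooth compactly supported functions. -/
theorem hardy_inequality_degenerate_weight
    (N : ℕ) (hN : 2 ≤ N) (α : ℝ) (hα : α ∈ Set.Ioo (0 : ℝ) 2)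
    (Ω : Set (EuclideanSpace ℝ (Fin N))) (hΩo : IsOpen Ω)
    (hΩb : Bornology.IsBounded Ω) (h0 : (0 : EuclideanSpace ℝ (Fin N)) ∈ Ω)
    (u : EuclideanSpace ℝ (Fin N) → ℝ) (hu : ContDiff ℝ (⊤ : ℕ∞) u)
    (hcpt : HasCompactSupport u) (hsupp : tsupport u ⊆ Ω) :
    ((N : ℝ) - 2 + α) ^ 2 * ∫ x in Ω, ‖x‖ ^ (α - 2) * (u x) ^ 2 ≤
      4 * ∫ x in Ω, ‖x‖ ^ α * ‖gradient u x‖ ^ 2 := by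
  obtain ⟨hα0, hα2⟩ := hα
  have hΩm : MeasurableSet Ω := hΩo.measurableSet
  have hucont : Continuous u := hu.continuous
  have huzero : ∀ x, x ∉ tsupport u → u x = 0 := fun x hx => image_eq_zero_of_notMem_tsupport hx
  have hGcont : Continuous (gradient u) := by
    have : Continuous (fderiv ℝ u) := hu.continuous_fderiv (by simp)
    exact (InnerProductSpace.toDual ℝ _).symm.continuous.comp this
  have hGzero : ∀ x, x ∉ tsupport u → gradient u x = 0 := by
    intro x hx
    have : fderiv ℝ u x = 0 := by
      by_contra h
      exact hx (support_fderiv_subset ℝ (Function.mem_support.mpr h))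
    simp only [gradient, this, map_zero]
  have hci : ∀ f : EuclideanSpace ℝ (Fin N) → ℝ, Continuous f →
      (∀ x, x ∉ tsupport u → f x = 0) → Integrable f := by
    intro f hf hf0
    apply hf.integrable_of_hasCompactSupport
    apply hcpt.mono'
    intro x hx
    by_contra h
    exact hx (hf0 x h)
  have hGsq : Integrable (fun x : EuclideanSpace ℝ (Fin N) => ‖gradient u x‖^2) :=
    hci _ (hGcont.norm.pow 2) (fun x hx => by simp [hGzero x hx])
  have hnormrpow : Continuous (fun x : EuclideanSpace ℝ (Fin N) => ‖x‖ ^ α) := by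
    rw [continuous_iff_continuousAt]
    intro x
    exact (Real.continuousAt_rpow_const _ _ (Or.inr hα0.le)).comp continuous_norm.continuousAt
  have hRn : Integrable (fun x : EuclideanSpace ℝ (Fin N) => ‖x‖ ^ α * ‖gradient u x‖^2) :=
    hci _ (hnormrpow.mul (hGcont.norm.pow 2)) (fun x hx => by simp [hGzero x hx])
  set R := ∫ x : EuclideanSpace ℝ (Fin N), ‖x‖ ^ α * ‖gradient u x‖^2 with hRdef
  set Gq := ∫ x : EuclideanSpace ℝ (Fin N), ‖gradient u x‖^2 with hGqdef
  have hRHS : ∫ x in Ω, ‖x‖ ^ α * ‖gradient u x‖^2 = R := by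
    rw [hRdef]
    apply setIntegral_eq_integral_of_forall_compl_eq_zero
    intro x hx
    have hxt : x ∉ tsupport u := fun h => hx (hsupp h)
    simp [hGzero x hxt]
  rw [hRHS]
  by_cases hInt : Integrable (fun x : EuclideanSpace ℝ (Fin N) => ‖x‖ ^ (α-2) * (u x)^2)
      (volume.restrict Ω)
  · -- integrable case: monotone convergence
    set fseq : ℕ → EuclideanSpace ℝ (Fin N) → ℝ :=
      fun n x => (‖x‖^2 + (1:ℝ)/(n+1)) ^ ((α-2)/2) * (u x)^2 with hfseqdef
    have hεpos : ∀ n : ℕ, (0:ℝ) < 1/(n+1) := fun n => by positivity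
    have hbase : ∀ (n : ℕ) (x : EuclideanSpace ℝ (Fin N)), (0:ℝ) < ‖x‖^2 + 1/(n+1) :=
      fun n x => by positivity
    have hfn_cont : ∀ n : ℕ, Continuous (fseq n) := by
      intro n
      apply Continuous.mul _ (hucont.pow 2)
      rw [continuous_iff_continuousAt]
      intro x
      exact ContinuousAt.rpow_const
        (((continuous_norm.pow 2).add continuous_const).continuousAt)
        (Or.inl (hbase n x).ne')
    have hfn_int : ∀ n : ℕ, Integrable (fseq n) (volume.restrict Ω) := by
      intro n
      exact (hci (fseq n) (hfn_cont n) (fun x hx => by simp [hfseqdef, huzero x hx])).restrict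
    have h_mono : ∀ᵐ x ∂(volume.restrict Ω), Monotone fun n => fseq n x := by
      apply Filter.Eventually.of_forall
      intro x m n hmn
      apply mul_le_mul_of_nonneg_right _ (sq_nonneg (u x))
      apply Real.rpow_le_rpow_of_nonpos (hbase n x)
      · have h1 : (1:ℝ)/(n+1) ≤ 1/(m+1) := by
          apply one_div_le_one_div_of_le (by positivity)
          exact_mod_cast by omega
        linarith
      · linarith
    have hne : ∀ᵐ x ∂(volume.restrict Ω), x ≠ (0 : EuclideanSpace ℝ (Fin N)) := by
      haveI : Nonempty (Fin N) := Fin.pos_iff_nonempty.mp (by omega)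
      have h1 : volume ({(0 : EuclideanSpace ℝ (Fin N))}) = 0 := measure_singleton _
      apply Filter.Eventually.filter_mono (ae_mono Measure.restrict_le_self)
      rw [ae_iff]
      simpa using h1
    have h_tendsto : ∀ᵐ x ∂(volume.restrict Ω),
        Filter.Tendsto (fun n => fseq n x) Filter.atTop (nhds (‖x‖ ^ (α-2) * (u x)^2)) := by
      filter_upwards [hne] with x hx
      have hx2 : (0:ℝ) < ‖x‖^2 := by
        have := norm_pos_iff.mpr hx
        positivity
      have hb : Filter.Tendsto (fun n : ℕ => ‖x‖^2 + (1:ℝ)/(n+1)) Filter.atTop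
          (nhds (‖x‖^2)) := by
        have := tendsto_one_div_add_atTop_nhds_zero_nat (𝕜 := ℝ)
        have h2 := this.const_add (‖x‖^2)
        simpa using h2
      have hc : ContinuousAt (fun t : ℝ => t ^ ((α-2)/2)) (‖x‖^2) :=
        Real.continuousAt_rpow_const _ _ (Or.inl hx2.ne')
      have h3 := (hc.tendsto.comp hb).mul_const ((u x)^2)
      have h4 : (‖x‖^2 : ℝ) ^ ((α-2)/2) = ‖x‖ ^ (α-2) := by
        rw [← Real.rpow_natCast ‖x‖ 2, ← Real.rpow_mul (norm_nonneg x)]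
        norm_num
        rw [show (2:ℝ)*((α-2)/2) = α-2 by ring]
      rw [h4] at h3
      exact h3
    have hlim := integral_tendsto_of_tendsto_of_monotone hfn_int hInt h_mono h_tendsto
    have hineq : ∀ n : ℕ, ((N:ℝ)-2+α)^2 * ∫ x in Ω, fseq n x
        ≤ 4*R + 4*((1:ℝ)/(n+1))^(α/2) * Gq := by
      intro n
      have hset : ∫ x in Ω, fseq n x = ∫ x : EuclideanSpace ℝ (Fin N), fseq n x := by
        apply setIntegral_eq_integral_of_forall_compl_eq_zero
        intro x hx
        have hxt : x ∉ tsupport u := fun h => hx (hsupp h)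
        simp [hfseqdef, huzero x hxt]
      rw [hset, hRdef, hGqdef]
      exact hardy_step hN ⟨hα0, hα2⟩ u hu hcpt (hεpos n)
    have hL : Filter.Tendsto (fun n => ((N:ℝ)-2+α)^2 * ∫ x in Ω, fseq n x) Filter.atTop
        (nhds (((N:ℝ)-2+α)^2 * ∫ x in Ω, ‖x‖ ^ (α-2) * (u x)^2)) := hlim.const_mul _
    have h1 : Filter.Tendsto (fun n : ℕ => ((1:ℝ)/(n+1))^(α/2)) Filter.atTop (nhds 0) := by
      have hb := tendsto_one_div_add_atTop_nhds_zero_nat (𝕜 := ℝ)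
      have hc : ContinuousAt (fun t : ℝ => t ^ (α/2)) 0 :=
        Real.continuousAt_rpow_const 0 _ (Or.inr (by positivity))
      have h2 := hc.tendsto.comp hb
      simpa [Function.comp_def, Real.zero_rpow (by positivity : (0:ℝ) < α/2).ne'] using h2
    have hRt : Filter.Tendsto (fun n : ℕ => 4*R + 4*((1:ℝ)/(n+1))^(α/2) * Gq) Filter.atTop
        (nhds (4*R)) := by
      have h2 := ((h1.const_mul (4:ℝ)).mul_const Gq).const_add (4*R)
      simpa using h2
    exact le_of_tendsto_of_tendsto' hL hRt hineq
  · -- non-integrable case: LHS is zero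
    rw [integral_undef hInt]
    have hR0 : 0 ≤ R := by
      rw [hRdef]
      apply integral_nonneg
      intro x
      exact mul_nonneg (Real.rpow_nonneg (norm_nonneg x) α) (sq_nonneg _)
    nlinarith [sq_nonneg ((N:ℝ)-2+α)]
end

section
/- Let N ≥ 2 be an integer, α ∈ (0,2) a real constant, Ω ⊆ ℝ^N a bounded open set with 0 ∈ Ω, and M = sup_{x∈Ω}|x| + 1. Then for every smooth function u : ℝ^N → ℝ with compact support contained in Ω, the weighted Poincaré inequality ∫_Ω u(x)² dx ≤ (4 M^{2−α} / (N − 2 + α)²) ∫_Ω |x|^α ‖∇u(x)‖² dx holds. -/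
open MeasureTheory


lemma div_identity (N : ℕ) [NeZero N] (g : EuclideanSpace ℝ (Fin N) → ℝ) (hg : ContDiff ℝ (⊤ : ℕ∞) g)
    (hc : HasCompactSupport g) :
    ∫ x : EuclideanSpace ℝ (Fin N), fderiv ℝ g x x = -(N : ℝ) * ∫ x : EuclideanSpace ℝ (Fin N), g x := by
  have hgd : Differentiable ℝ g := hg.differentiable (by simp)
  have hgc : Continuous g := hg.continuous
  have hfdc : Continuous (fderiv ℝ g) := ContDiff.continuous_fderiv hg (by simp)
  have hfdcs : HasCompactSupport (fderiv ℝ g) := hc.fderiv (𝕜 := ℝ)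
  have key : ∀ i : Fin N,
      (∫ x : EuclideanSpace ℝ (Fin N), x i * fderiv ℝ g x (EuclideanSpace.single i 1))
        = - ∫ x : EuclideanSpace ℝ (Fin N), g x := by
    intro i
    have hproj : Differentiable ℝ (fun x : EuclideanSpace ℝ (Fin N) => x i) :=
      (EuclideanSpace.proj i : EuclideanSpace ℝ (Fin N) →L[ℝ] ℝ).differentiable
    have hpd : ∀ x v, fderiv ℝ (fun x : EuclideanSpace ℝ (Fin N) => x i) x v = v i := by
      intro x v
      show fderiv ℝ (⇑(EuclideanSpace.proj i : EuclideanSpace ℝ (Fin N) →L[ℝ] ℝ)) x v = v i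
      rw [ContinuousLinearMap.fderiv]
      rfl
    have h1 : Integrable (fun x : EuclideanSpace ℝ (Fin N) =>
        fderiv ℝ (fun x : EuclideanSpace ℝ (Fin N) => x i) x (EuclideanSpace.single i 1) * g x) := by
      simp only [hpd, EuclideanSpace.single_apply, if_pos rfl, if_true, one_mul]
      exact hgc.integrable_of_hasCompactSupport hc
    have h2 : Integrable (fun x : EuclideanSpace ℝ (Fin N) =>
        x i * fderiv ℝ g x (EuclideanSpace.single i 1)) := by
      apply Continuous.integrable_of_hasCompactSupport
      · exact ((EuclideanSpace.proj i : EuclideanSpace ℝ (Fin N) →L[ℝ] ℝ).continuous).mul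
          ((ContinuousLinearMap.apply ℝ ℝ (EuclideanSpace.single i 1)).continuous.comp hfdc)
      · apply HasCompactSupport.mul_left
        exact (hfdcs.comp_left (g := fun L : EuclideanSpace ℝ (Fin N) →L[ℝ] ℝ =>
          L (EuclideanSpace.single i 1)) rfl)
    have h3 : Integrable (fun x : EuclideanSpace ℝ (Fin N) => x i * g x) := by
      apply Continuous.integrable_of_hasCompactSupport
      · exact ((EuclideanSpace.proj i : EuclideanSpace ℝ (Fin N) →L[ℝ] ℝ).continuous).mul hgc
      · exact hc.mul_left
    have := integral_mul_fderiv_eq_neg_fderiv_mul_of_integrable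
      (f := fun x : EuclideanSpace ℝ (Fin N) => x i) (g := g)
      (v := EuclideanSpace.single i 1) h1 h2 h3 (fun x _ => hproj x) (fun x _ => hgd x)
    rw [this]
    congr 1
    apply integral_congr_ae; filter_upwards with x
    rw [hpd]; simp [EuclideanSpace.single_apply]
  have hsum : ∀ x : EuclideanSpace ℝ (Fin N),
      (∑ i : Fin N, x i * fderiv ℝ g x (EuclideanSpace.single i 1)) = fderiv ℝ g x x := by
    intro x
    have hx : (∑ i : Fin N, x i • EuclideanSpace.single i (1:ℝ)) = x := by
      have := (EuclideanSpace.basisFun (Fin N) ℝ).sum_repr x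
      simpa [EuclideanSpace.basisFun_apply, EuclideanSpace.basisFun_repr] using this
    calc (∑ i : Fin N, x i * fderiv ℝ g x (EuclideanSpace.single i 1))
        = ∑ i : Fin N, fderiv ℝ g x (x i • EuclideanSpace.single i (1:ℝ)) := by
          simp [smul_eq_mul]
      _ = fderiv ℝ g x (∑ i : Fin N, x i • EuclideanSpace.single i (1:ℝ)) := by
          rw [map_sum]
      _ = fderiv ℝ g x x := by rw [hx]
  have hint : ∀ i : Fin N, Integrable (fun x : EuclideanSpace ℝ (Fin N) =>
      x i * fderiv ℝ g x (EuclideanSpace.single i 1)) := by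
    intro i
    apply Continuous.integrable_of_hasCompactSupport
    · exact ((EuclideanSpace.proj i : EuclideanSpace ℝ (Fin N) →L[ℝ] ℝ).continuous).mul
        ((ContinuousLinearMap.apply ℝ ℝ (EuclideanSpace.single i 1)).continuous.comp hfdc)
    · apply HasCompactSupport.mul_left
      exact (hfdcs.comp_left (g := fun L : EuclideanSpace ℝ (Fin N) →L[ℝ] ℝ =>
        L (EuclideanSpace.single i 1)) rfl)
  calc ∫ x : EuclideanSpace ℝ (Fin N), fderiv ℝ g x x
      = ∫ x : EuclideanSpace ℝ (Fin N), ∑ i : Fin N, x i * fderiv ℝ g x (EuclideanSpace.single i 1) := by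
        apply integral_congr_ae; filter_upwards with x; rw [hsum]
    _ = ∑ i : Fin N, ∫ x : EuclideanSpace ℝ (Fin N), x i * fderiv ℝ g x (EuclideanSpace.single i 1) :=
        integral_finset_sum _ (fun i _ => hint i)
    _ = ∑ i : Fin N, - ∫ x : EuclideanSpace ℝ (Fin N), g x := by simp only [key]
    _ = -(N : ℝ) * ∫ x : EuclideanSpace ℝ (Fin N), g x := by
        simp [Finset.sum_const, mul_comm]


/-- Weighted Poincaré inequality for the weight `|x|^α`, `α ∈ (0,2)`, on a bounded
open set `Ω ⊆ ℝ^N` containing the origin, with `M = sup_{x ∈ Ω} |x| + 1`. -/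
theorem poincare_inequality_degenerate_weight
    (N : ℕ) (hN : 2 ≤ N) (α : ℝ) (hα : α ∈ Set.Ioo (0 : ℝ) 2)
    (Ω : Set (EuclideanSpace ℝ (Fin N))) (hΩo : IsOpen Ω)
    (hΩb : Bornology.IsBounded Ω) (h0 : (0 : EuclideanSpace ℝ (Fin N)) ∈ Ω)
    (M : ℝ) (hM : M = sSup ((fun x : EuclideanSpace ℝ (Fin N) => ‖x‖) '' Ω) + 1)
    (u : EuclideanSpace ℝ (Fin N) → ℝ) (hu : ContDiff ℝ (⊤ : ℕ∞) u)
    (hcpt : HasCompactSupport u) (hsupp : tsupport u ⊆ Ω) :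
    ∫ x in Ω, (u x) ^ 2 ≤
      4 * M ^ (2 - α) / ((N : ℝ) - 2 + α) ^ 2 *
        ∫ x in Ω, ‖x‖ ^ α * ‖gradient u x‖ ^ 2 := by
  haveI : NeZero N := ⟨by omega⟩
  obtain ⟨hα1, hα2⟩ := hα
  have hNp : (0:ℝ) < N := by
    have : (2:ℝ) ≤ N := by exact_mod_cast hN
    linarith
  have hN2 : (2:ℝ) ≤ N := by exact_mod_cast hN
  -- bound on the norm over Ω
  have hbdd : BddAbove ((fun x : EuclideanSpace ℝ (Fin N) => ‖x‖) '' Ω) := by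
    obtain ⟨r, hr⟩ := hΩb.subset_closedBall 0
    refine ⟨r, ?_⟩
    rintro y ⟨x, hx, rfl⟩
    simpa using hr hx
  have h00 : (0:ℝ) ≤ sSup ((fun x : EuclideanSpace ℝ (Fin N) => ‖x‖) '' Ω) := by
    have := le_csSup hbdd (Set.mem_image_of_mem _ h0)
    simpa using this
  have hM1 : 1 ≤ M := by rw [hM]; linarith
  have hMx : ∀ x ∈ Ω, ‖x‖ ≤ M := by
    intro x hx
    have := le_csSup hbdd ⟨x, hx, rfl⟩
    rw [hM]; linarith
  set M' : ℝ := M ^ (2 - α) with hM'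
  have hM'0 : 0 ≤ M' := Real.rpow_nonneg (by linarith) _
  -- basic facts about u
  have hud : Differentiable ℝ u := hu.differentiable (by simp)
  have hfdc : Continuous (fderiv ℝ u) := ContDiff.continuous_fderiv hu (by simp)
  have hgradnorm : ∀ x : EuclideanSpace ℝ (Fin N), ‖gradient u x‖ = ‖fderiv ℝ u x‖ := by
    intro x; rw [gradient]; exact LinearIsometryEquiv.norm_map _ _
  set u2 : EuclideanSpace ℝ (Fin N) → ℝ := fun x => u x * u x with hu2def
  have hu2 : ContDiff ℝ (⊤ : ℕ∞) u2 := hu.mul hu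
  have hc2 : HasCompactSupport u2 := hcpt.mul_left
  have hu2d : Differentiable ℝ u2 := hu2.differentiable (by simp)
  set W : EuclideanSpace ℝ (Fin N) → ℝ := fun x => ‖x‖ ^ α * ‖gradient u x‖ ^ 2 with hWdef
  have hW0 : ∀ x, 0 ≤ W x := by
    intro x
    have : (0:ℝ) ≤ ‖x‖ ^ α := Real.rpow_nonneg (norm_nonneg _) _
    positivity
  -- continuity of W
  have hgradc : Continuous (gradient u) := by
    show Continuous fun x => (InnerProductSpace.toDual ℝ (EuclideanSpace ℝ (Fin N))).symm (fderiv ℝ u x)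
    exact (InnerProductSpace.toDual ℝ (EuclideanSpace ℝ (Fin N))).symm.continuous.comp hfdc
  have hWc : Continuous W := by
    apply Continuous.mul
    · exact continuous_norm.rpow_const (fun x => Or.inr hα1.le)
    · exact (hgradc.norm).pow 2
  have hfdzero : ∀ x : EuclideanSpace ℝ (Fin N), x ∉ tsupport u → fderiv ℝ u x = 0 := by
    intro x hx
    by_contra h
    exact hx (support_fderiv_subset ℝ (Function.mem_support.2 h))
  have hWcs : HasCompactSupport W := by
    apply HasCompactSupport.intro hcpt
    intro x hx
    have : ‖gradient u x‖ = 0 := by rw [hgradnorm, hfdzero x hx, norm_zero]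
    simp [hWdef, this]
  have IW : Integrable W := hWc.integrable_of_hasCompactSupport hWcs
  have Iu2 : Integrable u2 := (hu.continuous.mul hu.continuous).integrable_of_hasCompactSupport hc2
  -- F x = fderiv u2 x x
  set F : EuclideanSpace ℝ (Fin N) → ℝ := fun x => fderiv ℝ u2 x x with hFdef
  have hFc : Continuous F :=
    isBoundedBilinearMap_apply.continuous.comp
      ((ContDiff.continuous_fderiv hu2 (by simp)).prodMk continuous_id)
  have hfdzero2 : ∀ x : EuclideanSpace ℝ (Fin N), x ∉ tsupport u2 → fderiv ℝ u2 x = 0 := by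
    intro x hx
    by_contra h
    exact hx (support_fderiv_subset ℝ (Function.mem_support.2 h))
  have hFcs : HasCompactSupport F := by
    apply HasCompactSupport.intro hc2
    intro x hx
    simp [hFdef, hfdzero2 x hx]
  have IF : Integrable F := hFc.integrable_of_hasCompactSupport hFcs
  -- fderiv of u2
  have hD2 : ∀ x : EuclideanSpace ℝ (Fin N), fderiv ℝ u2 x x = 2 * u x * fderiv ℝ u x x := by
    intro x
    have h := fderiv_mul (𝕜 := ℝ) (hud x) (hud x)
    have h2 := congrArg (fun (L : EuclideanSpace ℝ (Fin N) →L[ℝ] ℝ) => L x) h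
    simp only [ContinuousLinearMap.add_apply, ContinuousLinearMap.smul_apply,
      smul_eq_mul] at h2
    calc fderiv ℝ u2 x x = u x * fderiv ℝ u x x + u x * fderiv ℝ u x x := h2
      _ = 2 * u x * fderiv ℝ u x x := by ring
  -- pointwise bound
  have hpt : ∀ x : EuclideanSpace ℝ (Fin N), -F x ≤ (N/2) * u2 x + (2/N) * (M' * W x) := by
    intro x
    set a : ℝ := |u x| with ha
    set D : ℝ := ‖fderiv ℝ u x‖ with hD
    have hb : |fderiv ℝ u x x| ≤ D * ‖x‖ := by
      have := (fderiv ℝ u x).le_opNorm x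
      rwa [Real.norm_eq_abs] at this
    have h1 : -F x ≤ 2 * a * (‖x‖ * D) := by
      have hFx : -F x = -(2 * u x * fderiv ℝ u x x) := by
        show -(fderiv ℝ u2 x x) = _
        rw [hD2 x]
      rw [hFx]
      calc -(2 * u x * fderiv ℝ u x x) ≤ |2 * u x * fderiv ℝ u x x| := neg_le_abs _
        _ = 2 * a * |fderiv ℝ u x x| := by
            rw [abs_mul, abs_mul, abs_two, ha]
        _ ≤ 2 * a * (D * ‖x‖) := by
            apply mul_le_mul_of_nonneg_left hb; positivity
        _ = 2 * a * (‖x‖ * D) := by ring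
    have h2 : (‖x‖ * D) ^ 2 ≤ M' * W x := by
      by_cases hx : x ∈ tsupport u
      · have hxM : ‖x‖ ≤ M := hMx x (hsupp hx)
        have hkey : ‖x‖ ^ (2:ℕ) ≤ M' * ‖x‖ ^ α := by
          rcases eq_or_lt_of_le (norm_nonneg x) with h0x | h0x
          · rw [← h0x, Real.zero_rpow (ne_of_gt hα1)]
            norm_num
          · have e1 : (‖x‖:ℝ) ^ (2:ℕ) = ‖x‖ ^ (2 - α) * ‖x‖ ^ α := by
              rw [← Real.rpow_add h0x, sub_add_cancel, ← Real.rpow_natCast ‖x‖ 2]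
              norm_num
            rw [e1]
            apply mul_le_mul_of_nonneg_right _ (Real.rpow_nonneg (norm_nonneg _) _)
            exact Real.rpow_le_rpow (norm_nonneg _) hxM (by linarith)
        calc (‖x‖ * D)^2 = ‖x‖^(2:ℕ) * D^2 := by ring
          _ ≤ (M' * ‖x‖ ^ α) * D^2 := by
              apply mul_le_mul_of_nonneg_right hkey; positivity
          _ = M' * W x := by rw [hWdef]; simp only [hgradnorm]; ring
      · have : D = 0 := by rw [hD, hfdzero x hx, norm_zero]
        rw [this]
        have : (0:ℝ) ≤ M' * W x := mul_nonneg hM'0 (hW0 x)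
        simpa using this
    have hN0 : (N:ℝ) ≠ 0 := ne_of_gt hNp
    have h3 : 2 * a * (‖x‖ * D) ≤ (N/2) * a^2 + (2/N) * (‖x‖*D)^2 := by
      have hkey2 : (N/2) * a^2 + (2/N) * (‖x‖*D)^2 - 2 * a * (‖x‖ * D)
          = ((N:ℝ) * a - 2 * (‖x‖*D))^2 / (2*N) := by
        field_simp
        ring
      have hnn : (0:ℝ) ≤ ((N:ℝ) * a - 2 * (‖x‖*D))^2 / (2*N) :=
        div_nonneg (sq_nonneg _) (by linarith)
      linarith
    have ha2 : a^2 = u2 x := by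
      show |u x|^2 = u x * u x
      rw [sq_abs]; ring
    rw [ha2] at h3
    have h4 := mul_le_mul_of_nonneg_left h2 (by positivity : (0:ℝ) ≤ 2/N)
    linarith [h1, h3, h4]
  -- main integral inequality
  have hdiv := div_identity N u2 hu2 hc2
  have hmain : (N:ℝ) * ∫ x, u2 x ≤ (N/2) * (∫ x, u2 x) + (2/N) * (M' * ∫ x, W x) := by
    have e1 : (N:ℝ) * ∫ x, u2 x = ∫ x, -F x := by
      rw [integral_neg]
      have : ∫ x, F x = -(N:ℝ) * ∫ x, u2 x := hdiv
      rw [this]; ring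
    have e2 : ∫ x, -F x ≤ ∫ x, ((N/2) * u2 x + (2/N) * (M' * W x)) := by
      apply integral_mono IF.neg _ hpt
      exact (Iu2.const_mul _).add ((IW.const_mul _).const_mul _)
    have e3 : ∫ x, ((N/2) * u2 x + (2/N) * (M' * W x))
        = (N/2) * (∫ x, u2 x) + (2/N) * (M' * ∫ x, W x) := by
      rw [integral_add (Iu2.const_mul _) ((IW.const_mul _).const_mul _),
        integral_const_mul, integral_const_mul, integral_const_mul]
    rw [e1]; rw [e3] at e2; exact e2
  have hWint0 : 0 ≤ ∫ x, W x := integral_nonneg hW0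
  have hA4 : ∫ x, u2 x ≤ 4/(N:ℝ)^2 * (M' * ∫ x, W x) := by
    have hX : 0 ≤ M' * ∫ x, W x := mul_nonneg hM'0 hWint0
    have h2 : (N:ℝ)/2 * ∫ x, u2 x ≤ 2/N * (M' * ∫ x, W x) := by linarith
    calc ∫ x, u2 x = (2/N) * ((N/2) * ∫ x, u2 x) := by field_simp
      _ ≤ (2/N) * (2/N * (M' * ∫ x, W x)) := by
          apply mul_le_mul_of_nonneg_left h2; positivity
      _ = 4/(N:ℝ)^2 * (M' * ∫ x, W x) := by ring
  -- convert set integrals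
  have hset1 : ∫ x in Ω, (u x)^2 = ∫ x, u2 x := by
    rw [show (fun x : EuclideanSpace ℝ (Fin N) => u x ^ 2) = u2 from funext fun x => by
      show u x ^ 2 = u x * u x; ring]
    apply setIntegral_eq_integral_of_forall_compl_eq_zero
    intro x hx
    have hxs : x ∉ tsupport u := fun h => hx (hsupp h)
    show u x * u x = 0
    rw [image_eq_zero_of_notMem_tsupport hxs]; ring
  have hset2 : ∫ x in Ω, ‖x‖ ^ α * ‖gradient u x‖ ^ 2 = ∫ x, W x := by
    apply setIntegral_eq_integral_of_forall_compl_eq_zero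
    intro x hx
    have hxs : x ∉ tsupport u := fun h => hx (hsupp h)
    have : ‖gradient u x‖ = 0 := by rw [hgradnorm, hfdzero x hxs, norm_zero]
    rw [this]; ring
  rw [hset1, hset2]
  -- compare constants
  have hd : 0 < (N:ℝ) - 2 + α := by linarith
  have hdN : (N:ℝ) - 2 + α ≤ N := by linarith
  calc ∫ x, u2 x ≤ 4/(N:ℝ)^2 * (M' * ∫ x, W x) := hA4
    _ ≤ 4/((N:ℝ) - 2 + α)^2 * (M' * ∫ x, W x) := by
        apply mul_le_mul_of_nonneg_right _ (mul_nonneg hM'0 hWint0)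
        apply div_le_div_of_nonneg_left (by norm_num) (by positivity)
        exact pow_le_pow_left₀ hd.le hdN 2
    _ = 4 * M' / ((N:ℝ) - 2 + α)^2 * ∫ x, W x := by ring
end

section
/- Let N ≥ 2 be an integer, α ∈ (0,2) a real constant, Ω ⊆ ℝ^N a bounded open set with 0 ∈ Ω, and ε > 0. Then for every smooth function z : ℝ^N → ℝ with compact support contained in Ω, the Hardy-type inequality (N + α − 2)² ∫_Ω ψ_ε(|x|)^{α−2} z(x)² dx ≤ 4 ∫_Ω ψ_ε(|x|)^α ‖∇z(x)‖² dx holds. -/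
open MeasureTheory

/-- The regularized absolute value: `ψ_ε(x) = |x|` for `|x| ≥ ε` and
`ψ_ε(x) = 3ε/8 + (3/(4ε))x² - (1/(8ε³))x⁴` for `|x| ≤ ε`. -/
noncomputable def psi (ε : ℝ) (x : ℝ) : ℝ :=
  if ε ≤ |x| then |x| else 3 * ε / 8 + 3 / (4 * ε) * x ^ 2 - 1 / (8 * ε ^ 3) * x ^ 4

noncomputable def hAux (ε t : ℝ) : ℝ :=
  if ε ^ 2 ≤ t then Real.sqrt t else 3 * ε / 8 + 3 / (4 * ε) * t - 1 / (8 * ε ^ 3) * t ^ 2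

noncomputable def hAux' (ε t : ℝ) : ℝ :=
  if ε ^ 2 ≤ t then 1 / (2 * Real.sqrt (max t (ε ^ 2))) else 3 / (4 * ε) - 1 / (4 * ε ^ 3) * t

lemma psi_eq_hAux {ε : ℝ} (hε : 0 < ε) {r : ℝ} (hr : 0 ≤ r) : psi ε r = hAux ε (r ^ 2) := by
  have hiff : ε ≤ |r| ↔ ε ^ 2 ≤ r ^ 2 := by
    rw [abs_of_nonneg hr]
    constructor
    · intro h; nlinarith
    · intro h; nlinarith
  unfold psi hAux
  by_cases h : ε ≤ |r|
  · rw [if_pos h, if_pos (hiff.mp h), Real.sqrt_sq hr, abs_of_nonneg hr]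
  · rw [if_neg h, if_neg (fun hh => h (hiff.mpr hh))]; ring

lemma hasDerivAt_hAux {ε : ℝ} (hε : 0 < ε) (t : ℝ) : HasDerivAt (hAux ε) (hAux' ε t) t := by
  have hpolyD : ∀ s : ℝ, HasDerivAt (fun u => 3 * ε / 8 + 3 / (4 * ε) * u - 1 / (8 * ε ^ 3) * u ^ 2)
      (3 / (4 * ε) - 1 / (4 * ε ^ 3) * s) s := by
    intro s
    have h1 := ((hasDerivAt_id s).const_mul (3 / (4 * ε))).const_add (3 * ε / 8)
    have h2 := (hasDerivAt_pow 2 s).const_mul (1 / (8 * ε ^ 3))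
    have := h1.sub h2
    refine this.congr_deriv ?_
    push_cast
    ring
  rcases lt_trichotomy t (ε ^ 2) with h | h | h
  · have hev : hAux ε =ᶠ[nhds t]
        (fun u => 3 * ε / 8 + 3 / (4 * ε) * u - 1 / (8 * ε ^ 3) * u ^ 2) := by
      filter_upwards [Iio_mem_nhds h] with s hs
      simp only [hAux]
      rw [if_neg (not_le.mpr (Set.mem_Iio.mp hs))]
    rw [show hAux' ε t = 3 / (4 * ε) - 1 / (4 * ε ^ 3) * t from if_neg (not_le.mpr h)]
    exact (hpolyD t).congr_of_eventuallyEq hev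
  · subst h
    have hsq : Real.sqrt (ε ^ 2) = ε := Real.sqrt_sq hε.le
    have hval : hAux' ε (ε ^ 2) = 1 / (2 * ε) := by
      rw [hAux', if_pos le_rfl, max_self, hsq]
    rw [hval]
    have hends : hAux ε (ε ^ 2) = 3 * ε / 8 + 3 / (4 * ε) * ε ^ 2 - 1 / (8 * ε ^ 3) * (ε ^ 2) ^ 2 := by
      rw [hAux, if_pos le_rfl, hsq]; field_simp; ring
    have hleft : HasDerivWithinAt (hAux ε) (1 / (2 * ε)) (Set.Iic (ε ^ 2)) (ε ^ 2) := by
      have hp : HasDerivWithinAt (fun u => 3 * ε / 8 + 3 / (4 * ε) * u - 1 / (8 * ε ^ 3) * u ^ 2)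
          (1 / (2 * ε)) (Set.Iic (ε ^ 2)) (ε ^ 2) := by
        have := (hpolyD (ε ^ 2)).hasDerivWithinAt (s := Set.Iic (ε ^ 2))
        refine this.congr_deriv ?_
        field_simp; ring
      refine hp.congr (fun s hs => ?_) hends
      rcases eq_or_lt_of_le (Set.mem_Iic.mp hs) with rfl | hlt
      · exact hends
      · rw [hAux, if_neg (not_le.mpr hlt)]
    have hright : HasDerivWithinAt (hAux ε) (1 / (2 * ε)) (Set.Ici (ε ^ 2)) (ε ^ 2) := by
      have hs : HasDerivWithinAt Real.sqrt (1 / (2 * ε)) (Set.Ici (ε ^ 2)) (ε ^ 2) := by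
        have := (Real.hasDerivAt_sqrt (by positivity : (ε:ℝ) ^ 2 ≠ 0)).hasDerivWithinAt
          (s := Set.Ici (ε ^ 2))
        rwa [hsq] at this
      refine hs.congr (fun s hs' => ?_) (by rw [hAux, if_pos le_rfl])
      rw [hAux, if_pos (Set.mem_Ici.mp hs')]
    have := hleft.union hright
    rwa [Set.Iic_union_Ici, hasDerivWithinAt_univ] at this
  · have ht0 : (0:ℝ) < t := lt_trans (by positivity) h
    have hev : hAux ε =ᶠ[nhds t] Real.sqrt := by
      filter_upwards [Ioi_mem_nhds h] with s hs
      simp only [hAux]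
      rw [if_pos (le_of_lt (Set.mem_Ioi.mp hs))]
    have hval : hAux' ε t = 1 / (2 * Real.sqrt t) := by
      rw [hAux', if_pos h.le, max_eq_left h.le]
    rw [hval]
    exact (Real.hasDerivAt_sqrt ht0.ne').congr_of_eventuallyEq hev

lemma continuous_hAux' {ε : ℝ} (hε : 0 < ε) : Continuous (hAux' ε) := by
  unfold hAux'
  apply Continuous.if_le
  · apply Continuous.div continuous_const
    · exact (continuous_const.mul ((continuous_id.max continuous_const).sqrt))
    · intro t
      have : (0:ℝ) < Real.sqrt (max t (ε ^ 2)) :=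
        Real.sqrt_pos.mpr (lt_of_lt_of_le (by positivity) (le_max_right _ _))
      positivity
  · exact (continuous_const.sub (continuous_const.mul continuous_id))
  · exact continuous_const
  · exact continuous_id
  · intro t ht
    rw [← ht, max_self, Real.sqrt_sq hε.le]
    field_simp
    ring

lemma contDiff_hAux {ε : ℝ} (hε : 0 < ε) : ContDiff ℝ 1 (hAux ε) := by
  rw [contDiff_one_iff_deriv]
  constructor
  · exact fun t => (hasDerivAt_hAux hε t).differentiableAt
  · have : deriv (hAux ε) = hAux' ε := funext fun t => (hasDerivAt_hAux hε t).deriv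
    rw [this]; exact continuous_hAux' hε

lemma hAux_pos {ε : ℝ} (hε : 0 < ε) {t : ℝ} (ht : 0 ≤ t) : 0 < hAux ε t := by
  unfold hAux
  by_cases h : ε ^ 2 ≤ t
  · rw [if_pos h]
    exact Real.sqrt_pos.mpr (lt_of_lt_of_le (by positivity) h)
  · rw [if_neg h]
    push_neg at h
    have key : 3 * ε / 8 + 3 / (4 * ε) * t - 1 / (8 * ε ^ 3) * t ^ 2
        = (3 * ε ^ 4 + 6 * ε ^ 2 * t - t ^ 2) / (8 * ε ^ 3) := by field_simp; ring
    rw [key]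
    apply div_pos _ (by positivity)
    nlinarith [mul_le_mul_of_nonneg_right h.le ht]

lemma le_hAux_sq {ε : ℝ} (hε : 0 < ε) {r : ℝ} (hr : 0 ≤ r) : r ≤ hAux ε (r ^ 2) := by
  unfold hAux
  by_cases h : ε ^ 2 ≤ r ^ 2
  · rw [if_pos h, Real.sqrt_sq hr]
  · rw [if_neg h]
    push_neg at h
    have hrε : r ≤ ε := by nlinarith
    have key : 8 * ε ^ 3 * ((3 * ε / 8 + 3 / (4 * ε) * r ^ 2 - 1 / (8 * ε ^ 3) * (r ^ 2) ^ 2) - r)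
        = (ε - r) ^ 3 * (r + 3 * ε) := by field_simp; ring
    nlinarith [pow_pos hε 3, pow_nonneg (sub_nonneg.mpr hrε) 3]

lemma two_mul_hAux'_le {ε : ℝ} (hε : 0 < ε) {t : ℝ} (ht : 0 ≤ t) :
    2 * t * hAux' ε t ≤ hAux ε t := by
  unfold hAux hAux'
  by_cases h : ε ^ 2 ≤ t
  · rw [if_pos h, if_pos h, max_eq_left h]
    have ht0 : (0:ℝ) < t := lt_of_lt_of_le (by positivity) h
    have hst : 0 < Real.sqrt t := Real.sqrt_pos.mpr ht0
    have h1 : Real.sqrt t * Real.sqrt t = t := Real.mul_self_sqrt ht0.le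
    have : 2 * t * (1 / (2 * Real.sqrt t)) = Real.sqrt t := by
      field_simp
      nlinarith [h1]
    rw [this]
  · rw [if_neg h, if_neg h]
    push_neg at h
    have key : (3 * ε / 8 + 3 / (4 * ε) * t - 1 / (8 * ε ^ 3) * t ^ 2)
        - 2 * t * (3 / (4 * ε) - 1 / (4 * ε ^ 3) * t) = 3 * (ε ^ 2 - t) ^ 2 / (8 * ε ^ 3) := by
      field_simp; ring
    nlinarith [div_nonneg (by positivity : (0:ℝ) ≤ 3 * (ε ^ 2 - t) ^ 2) (by positivity : (0:ℝ) ≤ 8 * ε ^ 3), key]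

set_option maxHeartbeats 2000000

/-- Hardy-type inequality for the approximating weight `w_ε(x) = ψ_ε(|x|)^α`. -/
theorem hardy_inequality_approximating_weight
    (N : ℕ) (hN : 2 ≤ N) (α : ℝ) (hα : α ∈ Set.Ioo (0 : ℝ) 2)
    (Ω : Set (EuclideanSpace ℝ (Fin N))) (hΩo : IsOpen Ω)
    (hΩb : Bornology.IsBounded Ω) (h0 : (0 : EuclideanSpace ℝ (Fin N)) ∈ Ω)
    (ε : ℝ) (hε : 0 < ε)
    (z : EuclideanSpace ℝ (Fin N) → ℝ) (hz : ContDiff ℝ (⊤ : ℕ∞) z)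
    (hcpt : HasCompactSupport z) (hsupp : tsupport z ⊆ Ω) :
    ((N : ℝ) + α - 2) ^ 2 * ∫ x in Ω, (psi ε ‖x‖) ^ (α - 2) * (z x) ^ 2 ≤
      4 * ∫ x in Ω, (psi ε ‖x‖) ^ α * ‖gradient z x‖ ^ 2 := by
  classical
  obtain ⟨hα0, hα2⟩ := hα
  obtain ⟨R, hR⟩ := hcpt.isBounded.subset_closedBall (0 : EuclideanSpace ℝ (Fin N))
  let E := EuclideanSpace ℝ (Fin N)
  set W : E → ℝ := fun x => hAux ε (‖x‖ ^ 2) with hWdef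
  have hWpos : ∀ x, 0 < W x := fun x => hAux_pos hε (sq_nonneg _)
  set DW : E → (E →L[ℝ] ℝ) := fun x => hAux' ε (‖x‖ ^ 2) • (2 • (innerSL ℝ x)) with hDWdef
  have hW : ∀ x, HasFDerivAt W (DW x) x := fun x =>
    (hasDerivAt_hAux hε (‖x‖ ^ 2)).comp_hasFDerivAt (f := fun x : E => ‖x‖ ^ 2) x
      (hasStrictFDerivAt_norm_sq x).hasFDerivAt
  set ρ : E → ℝ := fun x => W x ^ (α - 2) with hρdef
  set Dρ : E → (E →L[ℝ] ℝ) := fun x => ((α - 2) * W x ^ (α - 2 - 1)) • DW x with hDρdef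
  have hρ : ∀ x, HasFDerivAt ρ (Dρ x) x := fun x =>
    (Real.hasDerivAt_rpow_const (x := W x) (p := α - 2)
      (Or.inl (hWpos x).ne')).comp_hasFDerivAt x (hW x)
  have hWc1 : ContDiff ℝ 1 W := (contDiff_hAux hε).comp (contDiff_norm_sq ℝ)
  have hρc1 : ContDiff ℝ 1 ρ := by
    rw [contDiff_iff_contDiffAt]
    exact fun x => (hWc1.contDiffAt).rpow_const_of_ne (hWpos x).ne'
  set V : Fin N → E → ℝ := fun i x => ρ x * x i with hVdef
  set DV : Fin N → E → (E →L[ℝ] ℝ) :=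
    fun i x => ρ x • (EuclideanSpace.proj i) + (x i) • Dρ x with hDVdef
  have hV : ∀ i x, HasFDerivAt (V i) (DV i x) x := fun i x =>
    (hρ x).mul ((EuclideanSpace.proj i : E →L[ℝ] ℝ).hasFDerivAt)
  have hVc1 : ∀ i, ContDiff ℝ 1 (V i) := fun i =>
    hρc1.mul ((EuclideanSpace.proj i : E →L[ℝ] ℝ).contDiff)
  -- the cutoff
  set R' : ℝ := max R 0 + 1 with hR'def
  have hR'pos : 0 < R' := by positivity
  set c : ContDiffBump (0 : E) := ⟨R', R' + 1, hR'pos, by linarith⟩ with hcdef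
  set χ : E → ℝ := fun x => c x with hχdef
  have hχ1 : ∀ x ∈ Metric.ball (0 : E) R', χ x = 1 := fun x hx =>
    c.one_of_mem_closedBall (Metric.ball_subset_closedBall hx)
  have hzball : tsupport z ⊆ Metric.ball (0 : E) R' := by
    refine hR.trans (Metric.closedBall_subset_ball ?_)
    simp only [hR'def]
    have : R ≤ max R 0 := le_max_left _ _
    linarith
  have hGev : ∀ i x, z x ≠ 0 → (fun y => χ y * V i y) =ᶠ[nhds x] V i := by
    intro i x hzx
    have hx : x ∈ Metric.ball (0 : E) R' := hzball (subset_tsupport z hzx)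
    filter_upwards [Metric.isOpen_ball.mem_nhds hx] with y hy
    rw [hχ1 y hy, one_mul]
  set G : Fin N → EuclideanSpace ℝ (Fin N) → ℝ := fun i x => χ x * V i x with hGdef
  have hGc1 : ∀ i, ContDiff ℝ 1 (G i) := fun i => (c.contDiff).mul (hVc1 i)
  have hGcpt : ∀ i, HasCompactSupport (G i) := fun i => (c.hasCompactSupport).mul_right
  have hGlip : ∀ i, ∃ C, LipschitzWith C (G i) := fun i =>
    ContDiff.lipschitzWith_of_hasCompactSupport (hGcpt i) (hGc1 i) one_ne_zero
  set zsq : EuclideanSpace ℝ (Fin N) → ℝ := fun x => z x ^ 2 with hzsqdef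
  have hzsqc : ContDiff ℝ (⊤ : ℕ∞) zsq := hz.pow 2
  have hzsqcpt : HasCompactSupport zsq := by
    refine HasCompactSupport.intro hcpt (fun x hx => ?_)
    simp [hzsqdef, image_eq_zero_of_notMem_tsupport hx]
  obtain ⟨D, hD⟩ := ContDiff.lipschitzWith_of_hasCompactSupport hzsqcpt hzsqc (by simp)
  set e : Fin N → EuclideanSpace ℝ (Fin N) := fun i => EuclideanSpace.single i 1 with hedef
  have byparts : ∀ i, ∫ x, lineDeriv ℝ (G i) x (e i) * zsq x
      = ∫ x, lineDeriv ℝ zsq x (-(e i)) * G i x := by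
    intro i
    obtain ⟨C, hC⟩ := hGlip i
    exact hC.integral_lineDeriv_mul_eq hD hzsqcpt (e i)
  have hzdiff : Differentiable ℝ z := hz.differentiable (by simp)
  have hzsqD : ∀ x, HasFDerivAt zsq ((2 * z x) • fderiv ℝ z x) x := by
    intro x
    have h := ((hzdiff x).hasFDerivAt).mul ((hzdiff x).hasFDerivAt)
    have h2 : (fun y => z y * z y) = zsq := by funext y; rw [hzsqdef]; ring
    rw [← h2]
    refine h.congr_fderiv ?_
    rw [two_mul, add_smul]
  have claim1 : ∀ i, (fun x => lineDeriv ℝ (G i) x (e i) * zsq x)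
      = fun x => (DV i x (e i)) * zsq x := by
    intro i; funext x
    by_cases hzx : z x = 0
    · have hz0 : zsq x = 0 := by simp [hzsqdef, hzx]
      rw [hz0, mul_zero, mul_zero]
    · have hev := hGev i x hzx
      have h1 : lineDeriv ℝ (G i) x (e i) = fderiv ℝ (G i) x (e i) :=
        ((hGc1 i).differentiable one_ne_zero x).lineDeriv_eq_fderiv
      have h2 : fderiv ℝ (G i) x = DV i x := by
        rw [Filter.EventuallyEq.fderiv_eq hev]
        exact (hV i x).fderiv
      rw [h1, h2]
  have claim2 : ∀ i, (fun x => lineDeriv ℝ zsq x (-(e i)) * G i x)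
      = fun x => (-(2 * z x * fderiv ℝ z x (e i))) * V i x := by
    intro i; funext x
    have h1 : lineDeriv ℝ zsq x (-(e i)) = -(2 * z x * fderiv ℝ z x (e i)) := by
      rw [(hzsqD x).differentiableAt.lineDeriv_eq_fderiv, (hzsqD x).fderiv]
      simp [smul_eq_mul, mul_assoc]
    rw [h1]
    by_cases hzx : z x = 0
    · simp [hzx]
    · have hχx : χ x = 1 := hχ1 x (hzball (subset_tsupport z hzx))
      simp [hGdef, hχx]
  have hxsum : ∀ x : EuclideanSpace ℝ (Fin N), ∑ i, x i • e i = x := by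
    intro x
    have := (EuclideanSpace.basisFun (Fin N) ℝ).sum_repr x
    simpa [hedef, EuclideanSpace.basisFun_apply, EuclideanSpace.basisFun_repr] using this
  have happly : ∀ (L : EuclideanSpace ℝ (Fin N) →L[ℝ] ℝ) (x : EuclideanSpace ℝ (Fin N)),
      ∑ i, x i * L (e i) = L x := by
    intro L x
    have h : ∀ i ∈ Finset.univ, x i * L (e i) = L (x i • e i) := by
      intro i _; rw [ContinuousLinearMap.map_smul, smul_eq_mul]
    rw [Finset.sum_congr rfl h, ← map_sum, hxsum]
  have hproj : ∀ i, (EuclideanSpace.proj (𝕜 := ℝ) i) (e i) = 1 := by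
    intro i
    simp [hedef, EuclideanSpace.single_apply]
  have hDVsum : ∀ x, ∑ i, DV i x (e i) = Dρ x x + (N : ℝ) * ρ x := by
    intro x
    have h1 : ∀ i, DV i x (e i) = ρ x + x i * Dρ x (e i) := by
      intro i
      rw [hDVdef]
      simp only [ContinuousLinearMap.add_apply, ContinuousLinearMap.coe_smul',
        Pi.smul_apply, smul_eq_mul]
      rw [hproj i, mul_one]
    rw [Finset.sum_congr rfl (fun i _ => h1 i), Finset.sum_add_distrib, happly (Dρ x) x]
    simp [Finset.card_univ]
    ring
  have hcross_sum : ∀ x, ∑ i, (-(2 * z x * fderiv ℝ z x (e i))) * V i x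
      = (-(2 * z x) * ρ x) * fderiv ℝ z x x := by
    intro x
    rw [← happly (fderiv ℝ z x) x, Finset.mul_sum]
    apply Finset.sum_congr rfl
    intro i _
    rw [hVdef]
    ring
  -- continuity and integrability infrastructure
  have hWcont : Continuous W := hWc1.continuous
  have hρcont : Continuous ρ := hρc1.continuous
  have hn2cont : Continuous fun x : EuclideanSpace ℝ (Fin N) => ‖x‖ ^ 2 := continuous_norm.pow 2
  have hWrpow : ∀ p : ℝ, Continuous fun x => W x ^ p := fun p =>
    hWcont.rpow_const (fun x => Or.inl (hWpos x).ne')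
  have hDρapp : ∀ v : EuclideanSpace ℝ (Fin N), (fun x => Dρ x v)
      = fun x => ((α - 2) * W x ^ (α - 2 - 1)) * (hAux' ε (‖x‖ ^ 2) * (2 * inner ℝ x v)) := by
    intro v; funext x
    rw [hDρdef, hDWdef]
    simp only [ContinuousLinearMap.coe_smul', Pi.smul_apply, smul_eq_mul,
      ContinuousLinearMap.smul_apply, innerSL_apply_apply]
    push_cast
    ring
  have hDρappcont : ∀ v, Continuous fun x => Dρ x v := by
    intro v
    rw [hDρapp v]
    exact (continuous_const.mul (hWrpow _)).mul
      (((continuous_hAux' hε).comp hn2cont).mul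
        (continuous_const.mul (continuous_id.inner continuous_const)))
  have hDρxx : (fun x => Dρ x x)
      = fun x => ((α - 2) * W x ^ (α - 2 - 1)) * (hAux' ε (‖x‖ ^ 2) * (2 * ‖x‖ ^ 2)) := by
    funext x
    have := congrFun (hDρapp x) x
    rw [this, real_inner_self_eq_norm_sq]
  have hInt : ∀ f : EuclideanSpace ℝ (Fin N) → ℝ, Continuous f →
      (∀ x, x ∉ tsupport z → f x = 0) → Integrable f := fun f hf h0f =>
    hf.integrable_of_hasCompactSupport (HasCompactSupport.intro hcpt h0f)
  have hzx0 : ∀ x, x ∉ tsupport z → z x = 0 := fun x hx => image_eq_zero_of_notMem_tsupport hx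
  have hDz0 : ∀ x, x ∉ tsupport z → fderiv ℝ z x = 0 := by
    intro x hx
    by_contra hne
    exact hx (support_fderiv_subset ℝ hne)
  have hDzcont : Continuous fun x => fderiv ℝ z x := hz.continuous_fderiv (by simp)
  have IA : Integrable fun x => ρ x * zsq x :=
    hInt _ (hρcont.mul hzsqc.continuous) (fun x hx => by simp [hzsqdef, hzx0 x hx])
  have IdivV : Integrable fun x => (Dρ x x + (N : ℝ) * ρ x) * zsq x := by
    apply hInt
    · refine Continuous.mul (Continuous.add ?_ (continuous_const.mul hρcont)) hzsqc.continuous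
      rw [hDρxx]
      exact (continuous_const.mul (hWrpow _)).mul
        (((continuous_hAux' hε).comp hn2cont).mul (continuous_const.mul hn2cont))
    · intro x hx; simp [hzsqdef, hzx0 x hx]
  have IDVi : ∀ i, Integrable fun x => (DV i x (e i)) * zsq x := by
    intro i
    apply hInt
    · refine Continuous.mul ?_ hzsqc.continuous
      have h1 : (fun x => DV i x (e i)) = fun x => ρ x + x i * Dρ x (e i) := by
        funext x
        rw [hDVdef]
        simp only [ContinuousLinearMap.add_apply, ContinuousLinearMap.coe_smul',
          Pi.smul_apply, smul_eq_mul]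
        rw [hproj i, mul_one]
      rw [h1]
      exact hρcont.add (((EuclideanSpace.proj (𝕜 := ℝ) i).continuous).mul (hDρappcont (e i)))
    · intro x hx; simp [hzsqdef, hzx0 x hx]
  have Icross : ∀ i, Integrable fun x => (-(2 * z x * fderiv ℝ z x (e i))) * V i x := by
    intro i
    apply hInt
    · have hfe : Continuous fun x => fderiv ℝ z x (e i) := by
        exact hDzcont.clm_apply continuous_const
      refine Continuous.mul ?_ ?_
      · exact ((continuous_const.mul hz.continuous).mul hfe).neg
      · exact hρcont.mul (EuclideanSpace.proj (𝕜 := ℝ) i).continuous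
    · intro x hx; simp [hVdef, hzx0 x hx]
  have Icross' : Integrable fun x => (-(2 * z x) * ρ x) * fderiv ℝ z x x := by
    apply hInt
    · refine Continuous.mul ((continuous_const.mul hz.continuous).neg.mul hρcont) ?_
      exact hDzcont.clm_apply continuous_id
    · intro x hx; simp [hzx0 x hx]
  have IB : Integrable fun x => W x ^ α * ‖fderiv ℝ z x‖ ^ 2 := by
    apply hInt
    · exact (hWrpow α).mul (hDzcont.norm.pow 2)
    · intro x hx; simp [hDz0 x hx]
  set lam : ℝ := (N : ℝ) + α - 2 with hlamdef
  have hN2 : (2:ℝ) ≤ (N:ℝ) := by exact_mod_cast hN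
  have hlam : 0 < lam := by rw [hlamdef]; linarith
  have hzsqnn : ∀ x, 0 ≤ zsq x := fun x => sq_nonneg (z x)
  have hρnn : ∀ x, 0 ≤ ρ x := fun x => (Real.rpow_pos_of_pos (hWpos x) _).le
  -- pointwise divergence lower bound
  have hdiv_ge : ∀ x, lam * (ρ x * zsq x) ≤ (Dρ x x + (N : ℝ) * ρ x) * zsq x := by
    intro x
    have hle : 2 * ‖x‖ ^ 2 * hAux' ε (‖x‖ ^ 2) ≤ W x := two_mul_hAux'_le hε (sq_nonneg _)
    have hWp := hWpos x
    have hcoef : (α - 2) * W x ^ (α - 2 - 1) ≤ 0 :=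
      mul_nonpos_of_nonpos_of_nonneg (by linarith) (Real.rpow_pos_of_pos hWp _).le
    have hkey : (α - 2) * ρ x ≤ Dρ x x := by
      rw [congrFun hDρxx x]
      have h1 : ((α - 2) * W x ^ (α - 2 - 1)) * (hAux' ε (‖x‖ ^ 2) * (2 * ‖x‖ ^ 2))
          = ((α - 2) * W x ^ (α - 2 - 1)) * (2 * ‖x‖ ^ 2 * hAux' ε (‖x‖ ^ 2)) := by ring
      rw [h1]
      refine le_trans (le_of_eq ?_) (mul_le_mul_of_nonpos_left hle hcoef)
      have h2 : ρ x = W x ^ (α - 2 - 1) * W x := by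
        rw [hρdef]
        rw [← Real.rpow_add_one hWp.ne' (α - 2 - 1)]
        norm_num
      rw [h2]; ring
    have hmono : lam * ρ x ≤ Dρ x x + (N : ℝ) * ρ x := by
      have hr : lam * ρ x = (α - 2) * ρ x + (N : ℝ) * ρ x := by rw [hlamdef]; ring
      linarith
    calc lam * (ρ x * zsq x) = (lam * ρ x) * zsq x := by ring
      _ ≤ (Dρ x x + (N : ℝ) * ρ x) * zsq x := mul_le_mul_of_nonneg_right hmono (hzsqnn x)
  -- integration by parts chain
  have chain : ∫ x, (Dρ x x + (N : ℝ) * ρ x) * zsq x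
      = ∫ x, (-(2 * z x) * ρ x) * fderiv ℝ z x x := by
    have e1 : ∫ x, (Dρ x x + (N : ℝ) * ρ x) * zsq x
        = ∑ i, ∫ x, (DV i x) (e i) * zsq x := by
      rw [← integral_finset_sum _ (fun i _ => IDVi i)]
      congr 1; funext x
      rw [← Finset.sum_mul, hDVsum x]
    have e2 : ∀ i, ∫ x, (DV i x) (e i) * zsq x
        = ∫ x, -(2 * z x * (fderiv ℝ z x) (e i)) * V i x := by
      intro i
      calc ∫ x, (DV i x) (e i) * zsq x
          = ∫ x, lineDeriv ℝ (G i) x (e i) * zsq x := by rw [claim1 i]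
        _ = ∫ x, lineDeriv ℝ zsq x (-e i) * G i x := byparts i
        _ = ∫ x, -(2 * z x * (fderiv ℝ z x) (e i)) * V i x := by rw [claim2 i]
    have e3 : ∑ i, ∫ x, -(2 * z x * (fderiv ℝ z x) (e i)) * V i x
        = ∫ x, (-(2 * z x) * ρ x) * fderiv ℝ z x x := by
      rw [← integral_finset_sum _ (fun i _ => Icross i)]
      congr 1; funext x
      exact hcross_sum x
    rw [e1, Finset.sum_congr rfl (fun i _ => e2 i), e3]
  -- pointwise Cauchy-Schwarz/AM-GM bound
  have cross_le : ∀ x, (-(2 * z x) * ρ x) * fderiv ℝ z x x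
      ≤ (lam / 2) * (ρ x * zsq x) + (2 / lam) * (W x ^ α * ‖fderiv ℝ z x‖ ^ 2) := by
    intro x
    have hWp := hWpos x
    have hpow : ∀ p : ℝ, (W x ^ (p / 2)) ^ 2 = W x ^ p := by
      intro p
      rw [← Real.rpow_natCast (W x ^ (p / 2)) 2, ← Real.rpow_mul hWp.le]
      norm_num
    set a : ℝ := W x ^ ((α - 2) / 2) * |z x| with hadef
    set bb : ℝ := W x ^ (α / 2) * ‖fderiv ℝ z x‖ with hbdef
    have ha2 : a ^ 2 = ρ x * zsq x := by
      rw [hadef, mul_pow, hpow, sq_abs]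
    have hb2 : bb ^ 2 = W x ^ α * ‖fderiv ℝ z x‖ ^ 2 := by
      rw [hbdef, mul_pow, hpow]
    have hbound : (-(2 * z x) * ρ x) * fderiv ℝ z x x ≤ 2 * a * bb := by
      have h3 : |(fderiv ℝ z x) x| ≤ ‖fderiv ℝ z x‖ * ‖x‖ := by
        have := (fderiv ℝ z x).le_opNorm x
        rwa [Real.norm_eq_abs] at this
      have h4 : ‖x‖ ≤ W x := le_hAux_sq hε (norm_nonneg x)
      have h5 : ρ x * W x = W x ^ ((α - 2) / 2) * W x ^ (α / 2) := by
        have hρx : ρ x = W x ^ (α - 2) := rfl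
        rw [hρx, ← Real.rpow_add hWp ((α - 2) / 2) (α / 2),
          show (α - 2) / 2 + α / 2 = (α - 2) + 1 by ring, Real.rpow_add hWp, Real.rpow_one]
      calc (-(2 * z x) * ρ x) * fderiv ℝ z x x
          ≤ |(-(2 * z x) * ρ x) * fderiv ℝ z x x| := le_abs_self _
        _ = 2 * |z x| * ρ x * |(fderiv ℝ z x) x| := by
            rw [abs_mul, abs_mul, abs_neg, abs_mul, abs_of_nonneg (hρnn x)]
            norm_num
        _ ≤ 2 * |z x| * ρ x * (‖fderiv ℝ z x‖ * ‖x‖) := by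
            apply mul_le_mul_of_nonneg_left h3
            positivity
        _ ≤ 2 * |z x| * ρ x * (‖fderiv ℝ z x‖ * W x) := by
            apply mul_le_mul_of_nonneg_left _ (by positivity)
            exact mul_le_mul_of_nonneg_left h4 (norm_nonneg _)
        _ = 2 * a * bb := by
            rw [hadef, hbdef]
            linear_combination (2 * |z x| * ‖fderiv ℝ z x‖) * h5
    clear_value a bb
    have hamgm : 2 * a * bb ≤ (lam / 2) * a ^ 2 + (2 / lam) * bb ^ 2 := by
      have hq : (lam / 2) * a ^ 2 + (2 / lam) * bb ^ 2 - 2 * a * bb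
          = (lam * a - 2 * bb) ^ 2 / (2 * lam) := by
        field_simp
        ring
      have := div_nonneg (sq_nonneg (lam * a - 2 * bb)) (by linarith : (0:ℝ) ≤ 2 * lam)
      linarith [hq ▸ this]
    rw [← ha2, ← hb2]
    linarith
  -- combine the integral inequalities
  have final1 : lam * ∫ x, ρ x * zsq x ≤ ∫ x, (Dρ x x + (N : ℝ) * ρ x) * zsq x := by
    rw [← integral_const_mul]
    exact integral_mono (IA.const_mul lam) IdivV hdiv_ge
  have final2 : ∫ x, (-(2 * z x) * ρ x) * fderiv ℝ z x x
      ≤ (lam / 2) * (∫ x, ρ x * zsq x)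
        + (2 / lam) * ∫ x, W x ^ α * ‖fderiv ℝ z x‖ ^ 2 := by
    rw [← integral_const_mul, ← integral_const_mul,
      ← integral_add (IA.const_mul _) (IB.const_mul _)]
    exact integral_mono Icross' ((IA.const_mul _).add (IB.const_mul _)) cross_le
  have hfinal : lam ^ 2 * (∫ x, ρ x * zsq x)
      ≤ 4 * ∫ x, W x ^ α * ‖fderiv ℝ z x‖ ^ 2 := by
    have h1 : (lam / 2) * (∫ x, ρ x * zsq x)
        ≤ (2 / lam) * ∫ x, W x ^ α * ‖fderiv ℝ z x‖ ^ 2 := by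
      rw [chain] at final1
      have hsplit : lam * ∫ x, ρ x * zsq x = 2 * ((lam / 2) * ∫ x, ρ x * zsq x) := by ring
      linarith [hsplit ▸ final1]
    have h2 := mul_le_mul_of_nonneg_left h1 (by linarith : (0:ℝ) ≤ 2 * lam)
    calc lam ^ 2 * (∫ x, ρ x * zsq x) = (2 * lam) * ((lam / 2) * ∫ x, ρ x * zsq x) := by ring
      _ ≤ (2 * lam) * ((2 / lam) * ∫ x, W x ^ α * ‖fderiv ℝ z x‖ ^ 2) := h2
      _ = 4 * ∫ x, W x ^ α * ‖fderiv ℝ z x‖ ^ 2 := by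
          field_simp
          ring
  -- convert the goal
  have hgoalL : ∫ x in Ω, (psi ε ‖x‖) ^ (α - 2) * z x ^ 2 = ∫ x, ρ x * zsq x := by
    rw [setIntegral_eq_integral_of_forall_compl_eq_zero
      (fun x hx => by simp [hzx0 x (fun h => hx (hsupp h))])]
    congr 1; funext x
    rw [psi_eq_hAux hε (norm_nonneg x)]
  have hgn : ∀ x, ‖gradient z x‖ = ‖fderiv ℝ z x‖ := by
    intro x
    rw [gradient]
    exact LinearIsometryEquiv.norm_map _ _
  have hgoalR : ∫ x in Ω, (psi ε ‖x‖) ^ α * ‖gradient z x‖ ^ 2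
      = ∫ x, W x ^ α * ‖fderiv ℝ z x‖ ^ 2 := by
    rw [setIntegral_eq_integral_of_forall_compl_eq_zero (fun x hx => by
      rw [hgn x, hDz0 x (fun h => hx (hsupp h))]
      simp)]
    congr 1; funext x
    rw [psi_eq_hAux hε (norm_nonneg x), hgn x]
  rw [hgoalL, hgoalR]
  exact hfinal
end

section
/- Let N ≥ 2 be an integer, α ∈ (0,2) a real constant, Ω ⊆ ℝ^N a bounded open set with 0 ∈ Ω, M = sup_{x∈Ω}|x| + 1, and ε > 0. Then for every smooth function z : ℝ^N → ℝ with compact support contained in Ω, the weighted Poincaré inequality ∫_Ω z(x)² dx ≤ (4 M^{2−α} / (N + α − 2)²) ∫_Ω ψ_ε(|x|)^α ‖∇z(x)‖² dx holds. -/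
open MeasureTheory Filter Topology

lemma psi_ge {ε : ℝ} (hε : 0 < ε) (t : ℝ) : |t| ≤ psi ε t := by
  unfold psi
  split_ifs with h
  · exact le_refl _
  · push_neg at h
    set a := |t| with ha
    have ha0 : 0 ≤ a := abs_nonneg t
    have h1 : t ^ 2 = a ^ 2 := (sq_abs t).symm
    have h2 : t ^ 4 = a ^ 4 := by
      have : t ^ 4 = (t ^ 2) ^ 2 := by ring
      rw [this, h1]; ring
    have key : 0 ≤ (ε - a) ^ 3 * (3 * ε + a) :=
      mul_nonneg (pow_nonneg (by linarith) 3) (by linarith)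
    have hid : 3 * ε / 8 + 3 / (4 * ε) * a ^ 2 - 1 / (8 * ε ^ 3) * a ^ 4 - a
        = ((ε - a) ^ 3 * (3 * ε + a)) / (8 * ε ^ 3) := by
      field_simp
      ring
    have hpos : 0 ≤ ((ε - a) ^ 3 * (3 * ε + a)) / (8 * ε ^ 3) :=
      div_nonneg key (by positivity)
    rw [h1, h2]
    linarith [hid ▸ hpos]

lemma psi_continuous {ε : ℝ} (hε : 0 < ε) : Continuous (psi ε) := by
  unfold psi
  apply Continuous.if_le
  · exact continuous_abs
  · continuity
  · exact continuous_const
  · exact continuous_abs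
  · intro x hx
    have h2 : x ^ 2 = ε ^ 2 := by rw [← sq_abs, ← hx]
    have h4 : x ^ 4 = ε ^ 4 := by
      have : x ^ 4 = (x ^ 2) ^ 2 := by ring
      rw [this, h2]; ring
    rw [← hx, h2, h4]
    field_simp
    ring

-- integral of a directional derivative of a compactly supported C¹ function vanishes
lemma integral_fderiv_apply_eq_zero {E : Type*} [NormedAddCommGroup E] [NormedSpace ℝ E]
    [MeasurableSpace E] [BorelSpace E] [FiniteDimensional ℝ E]
    (μ : Measure E) [μ.IsAddHaarMeasure]
    {f : E → ℝ} (hf : ContDiff ℝ 1 f) (h'f : HasCompactSupport f) (v : E) :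
    ∫ x, fderiv ℝ f x v ∂μ = 0 := by
  obtain ⟨C, hC⟩ := ContDiff.lipschitzWith_of_hasCompactSupport h'f hf one_ne_zero
  have h1 := LipschitzWith.integral_lineDeriv_mul_eq (μ := μ)
    (LipschitzWith.const (1 : ℝ)) hC h'f (-v)
  have hc : ∀ x : E, lineDeriv ℝ (fun _ : E => (1 : ℝ)) x (-v) = 0 := fun x => by
    rw [(differentiableAt_const _).lineDeriv_eq_fderiv]; simp
  simp only [hc, zero_mul, integral_zero, neg_neg, mul_one] at h1
  have h2 : ∀ x, lineDeriv ℝ f x v = fderiv ℝ f x v := fun x =>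
    (hf.differentiable one_ne_zero x).lineDeriv_eq_fderiv
  rw [← integral_congr_ae (Filter.Eventually.of_forall h2)]
  exact h1.symm

lemma aux_divergence {N : ℕ} {F : EuclideanSpace ℝ (Fin N) → ℝ}
    (hF : ContDiff ℝ 1 F) (hcF : HasCompactSupport F) :
    ∫ x : EuclideanSpace ℝ (Fin N), (fderiv ℝ F x x + N * F x) = 0 := by
  classical
  set e : Fin N → EuclideanSpace ℝ (Fin N) := fun i => EuclideanSpace.single i 1 with he
  set g : Fin N → EuclideanSpace ℝ (Fin N) → ℝ := fun i y => F y * y i with hgdef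
  have hgc : ∀ i, ContDiff ℝ 1 (g i) := fun i =>
    hF.mul (EuclideanSpace.proj (𝕜 := ℝ) i).contDiff
  have hgs : ∀ i, HasCompactSupport (g i) := fun i => hcF.mul_right
  have hzero : ∀ i, (∫ x : EuclideanSpace ℝ (Fin N), fderiv ℝ (g i) x (e i)) = 0 := fun i =>
    integral_fderiv_apply_eq_zero volume (hgc i) (hgs i) (e i)
  have hderiv : ∀ i x, fderiv ℝ (g i) x (e i) = fderiv ℝ F x (e i) * x i + F x := by
    intro i x
    have h1 : HasFDerivAt (g i)
        (F x • (EuclideanSpace.proj (𝕜 := ℝ) i) + x i • fderiv ℝ F x) x :=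
      (hF.differentiable one_ne_zero x).hasFDerivAt.mul
        (EuclideanSpace.proj (𝕜 := ℝ) i).hasFDerivAt
    rw [h1.fderiv]
    simp only [ContinuousLinearMap.add_apply, ContinuousLinearMap.smul_apply, smul_eq_mul]
    have : (EuclideanSpace.proj (𝕜 := ℝ) i) (e i) = 1 := by
      simp [he, EuclideanSpace.single_apply]
    rw [this]
    ring
  -- integrability of each summand
  have hint : ∀ i, Integrable (fun x : EuclideanSpace ℝ (Fin N) => fderiv ℝ (g i) x (e i)) := by
    intro i
    apply Continuous.integrable_of_hasCompactSupport
    · exact ((hgc i).continuous_fderiv one_ne_zero).clm_apply continuous_const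
    · apply ((hgs i).fderiv ℝ).comp_left (g := fun L : EuclideanSpace ℝ (Fin N) →L[ℝ] ℝ => L (e i))
      simp
  have hsum : (∫ x : EuclideanSpace ℝ (Fin N), ∑ i, fderiv ℝ (g i) x (e i)) = 0 := by
    rw [integral_finset_sum Finset.univ (fun i _ => hint i)]
    simp [hzero]
  have hpt : ∀ x : EuclideanSpace ℝ (Fin N),
      (∑ i, fderiv ℝ (g i) x (e i)) = fderiv ℝ F x x + N * F x := by
    intro x
    have hx : (∑ i, x i • e i) = x := by
      simpa [he, EuclideanSpace.basisFun_apply] using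
        (EuclideanSpace.basisFun (Fin N) ℝ).sum_repr x
    have h2 : fderiv ℝ F x x = ∑ i, x i * fderiv ℝ F x (e i) := by
      calc fderiv ℝ F x x = fderiv ℝ F x (∑ i, x i • e i) := by rw [hx]
        _ = ∑ i, x i * fderiv ℝ F x (e i) := by rw [map_sum]; simp [smul_eq_mul]
    simp only [hderiv]
    rw [Finset.sum_add_distrib, Finset.sum_const, Finset.card_univ, Fintype.card_fin, h2]
    simp [mul_comm, nsmul_eq_mul]
  rw [← hsum]
  apply integral_congr_ae
  exact Filter.Eventually.of_forall fun x => (hpt x).symm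

lemma hcs_helper {X : Type*} [TopologicalSpace X] {z f : X → ℝ} (hz : HasCompactSupport z)
    (h : ∀ x, x ∉ tsupport z → f x = 0) : HasCompactSupport f :=
  hz.mono' (fun x hx => Classical.byContradiction fun hc => hx (h x hc))

lemma rpow_add_le {a b q : ℝ} (ha : 0 ≤ a) (hb : 0 ≤ b) (hq0 : 0 ≤ q) (hq1 : q ≤ 1) :
    (a + b) ^ q ≤ a ^ q + b ^ q := by
  have key := NNReal.rpow_add_le_add_rpow (a.toNNReal) (b.toNNReal) hq0 hq1
  have h1 : ((a.toNNReal + b.toNNReal : NNReal) : ℝ) = a + b := by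
    push_cast [Real.coe_toNNReal a ha, Real.coe_toNNReal b hb]; ring
  calc (a + b) ^ q = (((a.toNNReal + b.toNNReal : NNReal) : ℝ)) ^ q := by rw [h1]
    _ = (((a.toNNReal + b.toNNReal) ^ q : NNReal) : ℝ) := by rw [NNReal.coe_rpow]
    _ ≤ ((a.toNNReal ^ q + b.toNNReal ^ q : NNReal) : ℝ) := by exact_mod_cast key
    _ = a ^ q + b ^ q := by
        push_cast [NNReal.coe_rpow, Real.coe_toNNReal a ha, Real.coe_toNNReal b hb]; ring

set_option maxHeartbeats 2000000 in
/-- Weighted Poincaré inequality for the approximating weight `w_ε(x) = ψ_ε(|x|)^α`,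
with `M = sup_{x ∈ Ω} |x| + 1`. -/
theorem poincare_inequality_approximating_weight
    (N : ℕ) (hN : 2 ≤ N) (α : ℝ) (hα : α ∈ Set.Ioo (0 : ℝ) 2)
    (Ω : Set (EuclideanSpace ℝ (Fin N))) (hΩo : IsOpen Ω)
    (hΩb : Bornology.IsBounded Ω) (h0 : (0 : EuclideanSpace ℝ (Fin N)) ∈ Ω)
    (M : ℝ) (hM : M = sSup ((fun x : EuclideanSpace ℝ (Fin N) => ‖x‖) '' Ω) + 1)
    (ε : ℝ) (hε : 0 < ε)
    (z : EuclideanSpace ℝ (Fin N) → ℝ) (hz : ContDiff ℝ (⊤ : ℕ∞) z)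
    (hcpt : HasCompactSupport z) (hsupp : tsupport z ⊆ Ω) :
    ∫ x in Ω, (z x) ^ 2 ≤
      4 * M ^ (2 - α) / ((N : ℝ) + α - 2) ^ 2 *
        ∫ x in Ω, (psi ε ‖x‖) ^ α * ‖gradient z x‖ ^ 2 := by
  obtain ⟨hα0, hα2⟩ := hα
  have hN2 : (2 : ℝ) ≤ N := by exact_mod_cast hN
  set β : ℝ := (N : ℝ) + α - 2 with hβdef
  have hβ : 0 < β := by simp only [hβdef]; linarith
  -- facts about M
  obtain ⟨R, hR⟩ := isBounded_iff_forall_norm_le.1 hΩb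
  have hbdd : BddAbove ((fun x : EuclideanSpace ℝ (Fin N) => ‖x‖) '' Ω) :=
    ⟨R, fun r ⟨x, hx, hxr⟩ => hxr ▸ hR x hx⟩
  have hnorm_le : ∀ x ∈ Ω, ‖x‖ ≤ M - 1 := fun x hx => by
    have := le_csSup hbdd ⟨x, hx, rfl⟩
    rw [hM]; simpa using this
  have hM1 : (1 : ℝ) ≤ M := by
    have h00 : (0 : ℝ) ≤ sSup ((fun x : EuclideanSpace ℝ (Fin N) => ‖x‖) '' Ω) := by
      have := le_csSup hbdd ⟨0, h0, rfl⟩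
      simpa using this
    rw [hM]; linarith
  have hM0 : (0 : ℝ) < M := by linarith
  have hts : ∀ x ∈ tsupport z, ‖x‖ ≤ M - 1 := fun x hx => hnorm_le x (hsupp hx)
  -- continuity facts
  have hzc : Continuous z := hz.continuous
  have hdz : Continuous fun x => fderiv ℝ z x := hz.continuous_fderiv (by simp)
  have hgradnorm : ∀ x, ‖gradient z x‖ = ‖fderiv ℝ z x‖ := fun x => by
    unfold gradient
    exact LinearIsometryEquiv.norm_map _ _
  have hfd0 : ∀ x, x ∉ tsupport z → fderiv ℝ z x = 0 := fun x hx => by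
    by_contra h
    exact hx (support_fderiv_subset ℝ (Function.mem_support.2 h))
  set S := ∫ x in Ω, (z x) ^ 2 with hS
  set G := ∫ x in Ω, (psi ε ‖x‖) ^ α * ‖gradient z x‖ ^ 2 with hG
  set C0 := ∫ x : EuclideanSpace ℝ (Fin N), ‖fderiv ℝ z x‖ ^ 2 with hC0
  have hSert : S = ∫ x : EuclideanSpace ℝ (Fin N), (z x) ^ 2 := by
    rw [hS]
    apply setIntegral_eq_integral_of_forall_compl_eq_zero
    intro x hx
    rw [image_eq_zero_of_notMem_tsupport (fun h => hx (hsupp h))]; ring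
  have hGert : G = ∫ x : EuclideanSpace ℝ (Fin N), (psi ε ‖x‖) ^ α * ‖fderiv ℝ z x‖ ^ 2 := by
    rw [hG]
    simp_rw [hgradnorm]
    apply setIntegral_eq_integral_of_forall_compl_eq_zero
    intro x hx
    rw [hfd0 x (fun h => hx (hsupp h))]; simp
  -- integrability of basic pieces
  have hpsi_cont : Continuous fun x : EuclideanSpace ℝ (Fin N) => (psi ε ‖x‖) ^ α :=
    ((psi_continuous hε).comp continuous_norm).rpow_const (fun x => Or.inr hα0.le)
  have hnz2 : Continuous fun x : EuclideanSpace ℝ (Fin N) => ‖fderiv ℝ z x‖ ^ 2 :=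
    (hdz.norm).pow 2
  have iC0 : Integrable (fun x : EuclideanSpace ℝ (Fin N) => ‖fderiv ℝ z x‖ ^ 2) :=
    hnz2.integrable_of_hasCompactSupport
      (hcs_helper hcpt fun x hx => by rw [hfd0 x hx]; simp)
  have iG : Integrable (fun x : EuclideanSpace ℝ (Fin N) =>
      (psi ε ‖x‖) ^ α * ‖fderiv ℝ z x‖ ^ 2) :=
    (hpsi_cont.mul hnz2).integrable_of_hasCompactSupport
      (hcs_helper hcpt fun x hx => by simp only [Pi.mul_apply]; rw [hfd0 x hx]; simp)
  -- the key per-δ estimate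
  have key : ∀ δ : ℝ, 0 < δ → δ ≤ 1 →
      M ^ (α - 2) * S ≤ 4 / β ^ 2 * (G + δ ^ (α / 2) * C0) := by
    intro δ hδ0 hδ1
    have hspos : ∀ x : EuclideanSpace ℝ (Fin N), 0 < ‖x‖ ^ 2 + δ := fun x => by positivity
    set F : EuclideanSpace ℝ (Fin N) → ℝ :=
      fun x => z x ^ 2 * (‖x‖ ^ 2 + δ) ^ ((α - 2) / 2) with hFdef
    have hscd : ContDiff ℝ 1 (fun x : EuclideanSpace ℝ (Fin N) => ‖x‖ ^ 2 + δ) := by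
      have : ContDiff ℝ 1 (fun x : EuclideanSpace ℝ (Fin N) => ‖x‖ ^ 2) := by
        simp_rw [← real_inner_self_eq_norm_sq]
        exact (contDiff_id.inner ℝ contDiff_id)
      exact this.add contDiff_const
    have hwcd : ContDiff ℝ 1
        (fun x : EuclideanSpace ℝ (Fin N) => (‖x‖ ^ 2 + δ) ^ ((α - 2) / 2)) := by
      rw [contDiff_iff_contDiffAt]
      intro x
      exact (hscd.contDiffAt).rpow_const_of_ne (ne_of_gt (hspos x))
    have hwcont : Continuous
        (fun x : EuclideanSpace ℝ (Fin N) => (‖x‖ ^ 2 + δ) ^ ((α - 2) / 2)) := hwcd.continuous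
    have hz1 : ContDiff ℝ 1 z := hz.of_le (by simp)
    have hFcd : ContDiff ℝ 1 F := (hz1.pow 2).mul hwcd
    have hFcs : HasCompactSupport F := hcs_helper hcpt fun x hx => by
      rw [hFdef]; simp [image_eq_zero_of_notMem_tsupport hx]
    have hdiv := aux_divergence hFcd hFcs
    -- derivative of the weight
    have hwA : ∀ x : EuclideanSpace ℝ (Fin N),
        HasFDerivAt (fun y : EuclideanSpace ℝ (Fin N) => (‖y‖ ^ 2 + δ) ^ ((α - 2) / 2))
          (((α - 2) / 2 * (‖x‖ ^ 2 + δ) ^ ((α - 2) / 2 - 1)) •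
            (2 • (innerSL ℝ x).comp (ContinuousLinearMap.id ℝ (EuclideanSpace ℝ (Fin N))))) x := by
      intro x
      have h1 : HasFDerivAt (fun y : EuclideanSpace ℝ (Fin N) => ‖y‖ ^ 2 + δ)
          (2 • (innerSL ℝ x).comp (ContinuousLinearMap.id ℝ (EuclideanSpace ℝ (Fin N)))) x :=
        ((hasFDerivAt_id x).norm_sq).add_const δ
      have h2 : HasDerivAt (fun t : ℝ => t ^ ((α - 2) / 2))
          ((α - 2) / 2 * (‖x‖ ^ 2 + δ) ^ ((α - 2) / 2 - 1)) (‖x‖ ^ 2 + δ) :=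
        Real.hasDerivAt_rpow_const (Or.inl (ne_of_gt (hspos x)))
      exact h2.comp_hasFDerivAt x h1
    -- pointwise inequality
    have hpt : ∀ x : EuclideanSpace ℝ (Fin N),
        β / 2 * (z x ^ 2 * (‖x‖ ^ 2 + δ) ^ ((α - 2) / 2))
          - 2 / β * (‖fderiv ℝ z x‖ ^ 2 * (‖x‖ ^ 2 * (‖x‖ ^ 2 + δ) ^ ((α - 2) / 2)))
          ≤ fderiv ℝ F x x + N * F x := by
      intro x
      have hzx := (hz.differentiable (by simp) x).hasFDerivAt
      have hz2 : HasFDerivAt (fun y => z y ^ 2) ((2 * z x) • fderiv ℝ z x) x := by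
        have h := hzx.mul hzx
        rw [two_mul, add_smul]
        exact h.congr_of_eventuallyEq (Filter.Eventually.of_forall fun y => sq (z y))
      have hF' := hz2.mul (hwA x)
      have hEq : fderiv ℝ F x x =
          z x ^ 2 * ((α - 2) / 2 * (‖x‖ ^ 2 + δ) ^ ((α - 2) / 2 - 1) * (2 * ‖x‖ ^ 2))
            + (‖x‖ ^ 2 + δ) ^ ((α - 2) / 2) * (2 * z x * fderiv ℝ z x x) := by
        rw [(show HasFDerivAt F _ x from hF').fderiv]
        simp only [ContinuousLinearMap.add_apply, ContinuousLinearMap.smul_apply,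
          ContinuousLinearMap.coe_smul', Pi.smul_apply, ContinuousLinearMap.coe_comp',
          Function.comp_apply, ContinuousLinearMap.coe_id', id_eq, innerSL_apply_apply,
          smul_eq_mul, real_inner_self_eq_norm_sq]
        push_cast
        ring
      rw [hEq, hFdef]
      set a := z x with ha
      set d := fderiv ℝ z x x with hd
      set n := ‖fderiv ℝ z x‖ with hn
      set m := ‖x‖ with hm
      set W1 := (m ^ 2 + δ) ^ ((α - 2) / 2) with hW1
      set W2 := (m ^ 2 + δ) ^ ((α - 2) / 2 - 1) with hW2
      have hs' : 0 < m ^ 2 + δ := hspos x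
      have hW1pos : 0 < W1 := Real.rpow_pos_of_pos hs' _
      have hW2pos : 0 < W2 := Real.rpow_pos_of_pos hs' _
      have f3 : W1 = W2 * (m ^ 2 + δ) := by
        rw [hW1, hW2, ← Real.rpow_add_one (ne_of_gt hs')]
        ring_nf
      have f6 : m ^ 2 * W2 ≤ W1 := by
        rw [f3]
        have : m ^ 2 ≤ m ^ 2 + δ := by linarith
        nlinarith [hW2pos.le]
      have f5 : |d| ≤ n * m := by
        have := (fderiv ℝ z x).le_opNorm x
        rw [← hn, ← hm] at this
        simpa [Real.norm_eq_abs, hd] using this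
      have g1 : a ^ 2 * ((α - 2) * W1) ≤ a ^ 2 * ((α - 2) * (m ^ 2 * W2)) := by
        have h1 : (α - 2) * W1 ≤ (α - 2) * (m ^ 2 * W2) :=
          mul_le_mul_of_nonpos_left f6 (by linarith)
        exact mul_le_mul_of_nonneg_left h1 (sq_nonneg a)
      have hd2 : d ^ 2 ≤ (n * m) ^ 2 := by
        have h7 := abs_le.mp f5
        nlinarith [h7.1, h7.2]
      have hq : 0 ≤ β / 2 * a ^ 2 + 2 / β * d ^ 2 + 2 * a * d := by
        have hqq : (β / 2 * a ^ 2 + 2 / β * d ^ 2 + 2 * a * d) * (2 * β)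
            = (β * a + 2 * d) ^ 2 := by
          field_simp
          ring
        nlinarith [hqq, sq_nonneg (β * a + 2 * d), hβ]
      have gA : -(β / 2 * a ^ 2 + 2 / β * (n * m) ^ 2) ≤ 2 * a * d := by
        have h8 : 2 / β * d ^ 2 ≤ 2 / β * (n * m) ^ 2 :=
          mul_le_mul_of_nonneg_left hd2 (by positivity)
        linarith
      have gB : W1 * (-(β / 2 * a ^ 2 + 2 / β * (n * m) ^ 2)) ≤ W1 * (2 * a * d) :=
        mul_le_mul_of_nonneg_left gA hW1pos.le
      have hβne : β ≠ 0 := ne_of_gt hβ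
      have hNβ : (N : ℝ) = β - α + 2 := by rw [hβdef]; ring
      have gB' : (-(β / 2 * a ^ 2 + 2 / β * (n * m) ^ 2)) * W1 ≤ W1 * (2 * a * d) := by
        calc (-(β / 2 * a ^ 2 + 2 / β * (n * m) ^ 2)) * W1
            = W1 * (-(β / 2 * a ^ 2 + 2 / β * (n * m) ^ 2)) := by ring
          _ ≤ W1 * (2 * a * d) := gB
      have comb : β / 2 * (a ^ 2 * W1) - 2 / β * (n ^ 2 * (m ^ 2 * W1)) =
          a ^ 2 * ((α - 2) * W1) + (-(β / 2 * a ^ 2 + 2 / β * (n * m) ^ 2)) * W1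
            + (N : ℝ) * (a ^ 2 * W1) := by
        rw [hNβ]
        field_simp
        ring
      rw [comb]
      linarith [g1, gB']
    -- integrability
    have i1 : Integrable (fun x : EuclideanSpace ℝ (Fin N) =>
        z x ^ 2 * (‖x‖ ^ 2 + δ) ^ ((α - 2) / 2)) :=
      ((hzc.pow 2).mul hwcont).integrable_of_hasCompactSupport
        (hcs_helper hcpt fun x hx => by simp [image_eq_zero_of_notMem_tsupport hx])
    have i2 : Integrable (fun x : EuclideanSpace ℝ (Fin N) =>
        ‖fderiv ℝ z x‖ ^ 2 * (‖x‖ ^ 2 * (‖x‖ ^ 2 + δ) ^ ((α - 2) / 2))) :=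
      (hnz2.mul ((continuous_norm.pow 2).mul hwcont)).integrable_of_hasCompactSupport
        (hcs_helper hcpt fun x hx => by
          simp only [Pi.mul_apply, Pi.pow_apply]; rw [hfd0 x hx]; simp)
    have htsF : tsupport F ⊆ tsupport z := by
      apply closure_minimal _ isClosed_closure
      intro y hy
      apply subset_closure
      rw [Function.mem_support] at hy ⊢
      intro hzy
      apply hy
      rw [hFdef]; simp [hzy]
    have i3 : Integrable (fun x : EuclideanSpace ℝ (Fin N) =>
        fderiv ℝ F x x + N * F x) := by
      apply Continuous.integrable_of_hasCompactSupport
      · exact ((hFcd.continuous_fderiv one_ne_zero).clm_apply continuous_id).add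
          (continuous_const.mul hFcd.continuous)
      · apply hcs_helper hcpt
        intro x hx
        have hFx : F x = 0 := image_eq_zero_of_notMem_tsupport (fun h => hx (htsF h))
        have hdF : fderiv ℝ F x = 0 := by
          by_contra h
          exact hx (htsF (support_fderiv_subset ℝ (Function.mem_support.2 h)))
        rw [hFx, hdF]; simp
    have hmono : (∫ x : EuclideanSpace ℝ (Fin N),
        (β / 2 * (z x ^ 2 * (‖x‖ ^ 2 + δ) ^ ((α - 2) / 2))
          - 2 / β * (‖fderiv ℝ z x‖ ^ 2 * (‖x‖ ^ 2 * (‖x‖ ^ 2 + δ) ^ ((α - 2) / 2)))))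
        ≤ ∫ x : EuclideanSpace ℝ (Fin N), (fderiv ℝ F x x + N * F x) :=
      integral_mono ((i1.const_mul (β / 2)).sub (i2.const_mul (2 / β))) i3 (fun x => hpt x)
    rw [hdiv] at hmono
    have hsplit : (∫ x : EuclideanSpace ℝ (Fin N),
        (β / 2 * (z x ^ 2 * (‖x‖ ^ 2 + δ) ^ ((α - 2) / 2))
          - 2 / β * (‖fderiv ℝ z x‖ ^ 2 * (‖x‖ ^ 2 * (‖x‖ ^ 2 + δ) ^ ((α - 2) / 2)))))
        = β / 2 * (∫ x : EuclideanSpace ℝ (Fin N), z x ^ 2 * (‖x‖ ^ 2 + δ) ^ ((α - 2) / 2))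
          - 2 / β * (∫ x : EuclideanSpace ℝ (Fin N),
              ‖fderiv ℝ z x‖ ^ 2 * (‖x‖ ^ 2 * (‖x‖ ^ 2 + δ) ^ ((α - 2) / 2))) := by
      rw [integral_sub (i1.const_mul (β / 2)) (i2.const_mul (2 / β)),
        integral_const_mul, integral_const_mul]
    rw [hsplit] at hmono
    set A := ∫ x : EuclideanSpace ℝ (Fin N), z x ^ 2 * (‖x‖ ^ 2 + δ) ^ ((α - 2) / 2) with hA
    set B := ∫ x : EuclideanSpace ℝ (Fin N),
      ‖fderiv ℝ z x‖ ^ 2 * (‖x‖ ^ 2 * (‖x‖ ^ 2 + δ) ^ ((α - 2) / 2)) with hB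
    have hAB : A ≤ 4 / β ^ 2 * B := by
      have h' : β / 2 * A ≤ 2 / β * B := by linarith
      calc A = 2 / β * (β / 2 * A) := by field_simp
        _ ≤ 2 / β * (2 / β * B) := mul_le_mul_of_nonneg_left h' (by positivity)
        _ = 4 / β ^ 2 * B := by field_simp; ring
    -- lower bound for A
    have hlow : M ^ (α - 2) * S ≤ A := by
      rw [hSert, ← integral_const_mul]
      apply integral_mono (((hzc.pow 2).integrable_of_hasCompactSupport
        (hcs_helper hcpt fun x hx => by simp [image_eq_zero_of_notMem_tsupport hx])).const_mul _) i1
      intro x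
      by_cases hx : x ∈ tsupport z
      · have hm : ‖x‖ ≤ M - 1 := hts x hx
        have h1 : ‖x‖ ^ 2 + δ ≤ M ^ 2 := by nlinarith [norm_nonneg x]
        have h2 : (M ^ 2 : ℝ) ^ ((α - 2) / 2) ≤ (‖x‖ ^ 2 + δ) ^ ((α - 2) / 2) :=
          Real.rpow_le_rpow_of_nonpos (hspos x) h1 (by linarith)
        have h3 : (M ^ 2 : ℝ) ^ ((α - 2) / 2) = M ^ (α - 2) := by
          rw [← Real.rpow_natCast M 2, ← Real.rpow_mul hM0.le]
          congr 1
          push_cast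
          ring
        calc M ^ (α - 2) * z x ^ 2 = z x ^ 2 * (M ^ 2 : ℝ) ^ ((α - 2) / 2) := by
              rw [h3]; ring
          _ ≤ z x ^ 2 * (‖x‖ ^ 2 + δ) ^ ((α - 2) / 2) :=
              mul_le_mul_of_nonneg_left h2 (sq_nonneg _)
      · have hzx : z x = 0 := image_eq_zero_of_notMem_tsupport hx
        simp [hzx]
    -- upper bound for B
    have hup : B ≤ G + δ ^ (α / 2) * C0 := by
      have hpt2 : ∀ x : EuclideanSpace ℝ (Fin N),
          ‖fderiv ℝ z x‖ ^ 2 * (‖x‖ ^ 2 * (‖x‖ ^ 2 + δ) ^ ((α - 2) / 2))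
            ≤ (psi ε ‖x‖) ^ α * ‖fderiv ℝ z x‖ ^ 2 + δ ^ (α / 2) * ‖fderiv ℝ z x‖ ^ 2 := by
        intro x
        have hs' := hspos x
        have e1 : (‖x‖ ^ 2 + δ) ^ ((α - 2) / 2) * (‖x‖ ^ 2 + δ) = (‖x‖ ^ 2 + δ) ^ (α / 2) := by
          rw [show α / 2 = (α - 2) / 2 + 1 by ring, Real.rpow_add_one (ne_of_gt hs')]
        have h1 : ‖x‖ ^ 2 * (‖x‖ ^ 2 + δ) ^ ((α - 2) / 2) ≤ (‖x‖ ^ 2 + δ) ^ (α / 2) := by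
          rw [← e1]
          have h11 : ‖x‖ ^ 2 ≤ ‖x‖ ^ 2 + δ := by linarith
          nlinarith [Real.rpow_pos_of_pos hs' ((α - 2) / 2)]
        have h2 : (‖x‖ ^ 2 + δ) ^ (α / 2) ≤ ‖x‖ ^ α + δ ^ (α / 2) := by
          have := rpow_add_le (sq_nonneg ‖x‖) hδ0.le (by linarith : (0:ℝ) ≤ α / 2)
            (by linarith : α / 2 ≤ 1)
          have hxx : ((‖x‖ ^ 2 : ℝ)) ^ (α / 2) = ‖x‖ ^ α := by
            rw [← Real.rpow_natCast ‖x‖ 2, ← Real.rpow_mul (norm_nonneg x)]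
            congr 1
            push_cast
            ring
          linarith [hxx ▸ this]
        have h3 : ‖x‖ ^ α ≤ (psi ε ‖x‖) ^ α := by
          apply Real.rpow_le_rpow (norm_nonneg x) _ hα0.le
          have := psi_ge hε ‖x‖
          rwa [abs_norm] at this
        have hn2 : (0 : ℝ) ≤ ‖fderiv ℝ z x‖ ^ 2 := sq_nonneg _
        calc ‖fderiv ℝ z x‖ ^ 2 * (‖x‖ ^ 2 * (‖x‖ ^ 2 + δ) ^ ((α - 2) / 2))
            ≤ ‖fderiv ℝ z x‖ ^ 2 * ((psi ε ‖x‖) ^ α + δ ^ (α / 2)) := by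
              apply mul_le_mul_of_nonneg_left _ hn2
              linarith
          _ = (psi ε ‖x‖) ^ α * ‖fderiv ℝ z x‖ ^ 2 + δ ^ (α / 2) * ‖fderiv ℝ z x‖ ^ 2 := by ring
      have hmono2 : B ≤ ∫ x : EuclideanSpace ℝ (Fin N),
          ((psi ε ‖x‖) ^ α * ‖fderiv ℝ z x‖ ^ 2 + δ ^ (α / 2) * ‖fderiv ℝ z x‖ ^ 2) :=
        integral_mono i2 (iG.add (iC0.const_mul (δ ^ (α / 2)))) hpt2
      have hsplit2 : (∫ x : EuclideanSpace ℝ (Fin N),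
          ((psi ε ‖x‖) ^ α * ‖fderiv ℝ z x‖ ^ 2 + δ ^ (α / 2) * ‖fderiv ℝ z x‖ ^ 2))
          = (∫ x : EuclideanSpace ℝ (Fin N), (psi ε ‖x‖) ^ α * ‖fderiv ℝ z x‖ ^ 2)
            + δ ^ (α / 2) * C0 := by
        rw [integral_add iG (iC0.const_mul (δ ^ (α / 2))), integral_const_mul, ← hC0]
      rw [hsplit2] at hmono2
      rw [hGert]
      exact hmono2
    calc M ^ (α - 2) * S ≤ A := hlow
      _ ≤ 4 / β ^ 2 * B := hAB
      _ ≤ 4 / β ^ 2 * (G + δ ^ (α / 2) * C0) :=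
          mul_le_mul_of_nonneg_left hup (by positivity)
  -- pass to the limit δ → 0⁺
  have h0' : Tendsto (fun δ : ℝ => δ ^ (α / 2)) (𝓝[>] (0 : ℝ)) (𝓝 0) := by
    have hcont := (Real.continuousAt_rpow_const 0 (α / 2) (Or.inr (by positivity))).tendsto
    rw [Real.zero_rpow (by positivity : α / 2 ≠ 0)] at hcont
    exact hcont.mono_left nhdsWithin_le_nhds
  have htend : Tendsto (fun δ : ℝ => 4 / β ^ 2 * (G + δ ^ (α / 2) * C0)) (𝓝[>] (0 : ℝ))
      (𝓝 (4 / β ^ 2 * (G + 0 * C0))) :=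
    (((h0'.mul_const C0).const_add G).const_mul (4 / β ^ 2))
  have hlim : M ^ (α - 2) * S ≤ 4 / β ^ 2 * (G + 0 * C0) := by
    apply ge_of_tendsto htend
    filter_upwards [Ioc_mem_nhdsGT zero_lt_one] with δ hδ
    exact key δ hδ.1 hδ.2
  rw [zero_mul, add_zero] at hlim
  have h2 : M ^ (2 - α) * M ^ (α - 2) = 1 := by
    rw [← Real.rpow_add hM0]; norm_num
  calc S = M ^ (2 - α) * M ^ (α - 2) * S := by rw [h2, one_mul]
    _ = M ^ (2 - α) * (M ^ (α - 2) * S) := by ring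
    _ ≤ M ^ (2 - α) * (4 / β ^ 2 * G) :=
        mul_le_mul_of_nonneg_left hlim (Real.rpow_nonneg hM0.le _)
    _ = 4 * M ^ (2 - α) / β ^ 2 * G := by ring
end

section
/- Let α ∈ (0,2) and ε > 0, and consider the function f(x) = 3ε⁴ + 6ε²(1 − α)x² − (1 − 2α)x⁴ for x ∈ [0, ε]. Then for all x ∈ [0, ε] one has f(x) ≥ â, where â = ε⁴ · min{3, 4(2 − α)} if α ∈ (0, 1], and â = ε⁴ · min{3, (3/(2α − 1))(3α − 2)(2 − α)} if α ∈ (1, 2). -/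
/-- Lower bound for `f(x) = 3ε⁴ + 6ε²(1-α)x² - (1-2α)x⁴` on `[0, ε]`. -/
theorem quartic_lower_bound (α ε : ℝ) (hα : α ∈ Set.Ioo (0 : ℝ) 2) (hε : 0 < ε)
    (a : ℝ)
    (ha : a = if α ≤ 1 then ε ^ 4 * min 3 (4 * (2 - α))
              else ε ^ 4 * min 3 (3 / (2 * α - 1) * (3 * α - 2) * (2 - α))) :
    ∀ x ∈ Set.Icc (0 : ℝ) ε,
      3 * ε ^ 4 + 6 * ε ^ 2 * (1 - α) * x ^ 2 - (1 - 2 * α) * x ^ 4 ≥ a := by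
  obtain ⟨hα0, hα2⟩ := hα
  intro x hx
  obtain ⟨hx0, hxε⟩ := hx
  have hε4 : (0:ℝ) < ε ^ 4 := by positivity
  have hx2 : x ^ 2 ≤ ε ^ 2 := by nlinarith
  by_cases h1 : α ≤ 1
  · rw [if_pos h1] at ha
    have hle : a ≤ 3 * ε ^ 4 := by
      rw [ha]
      have := min_le_left (3:ℝ) (4 * (2 - α))
      nlinarith
    nlinarith [mul_nonneg (mul_nonneg (sub_nonneg.2 h1) (sub_nonneg.2 hx2)) (sq_nonneg x),
      sq_nonneg (x ^ 2)]
  · rw [if_neg h1] at ha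
    push_neg at h1
    have h2a : (0:ℝ) < 2 * α - 1 := by linarith
    have hle : a ≤ ε ^ 4 * (3 / (2 * α - 1) * (3 * α - 2) * (2 - α)) := by
      rw [ha]
      have := min_le_right (3:ℝ) (3 / (2 * α - 1) * (3 * α - 2) * (2 - α))
      nlinarith
    have key : ε ^ 4 * (3 / (2 * α - 1) * (3 * α - 2) * (2 - α)) ≤
        3 * ε ^ 4 + 6 * ε ^ 2 * (1 - α) * x ^ 2 - (1 - 2 * α) * x ^ 4 := by
      have heq : 3 / (2 * α - 1) * (3 * α - 2) * (2 - α)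
          = 3 * (3 * α - 2) * (2 - α) / (2 * α - 1) := by ring
      rw [heq, mul_div_assoc', div_le_iff₀ h2a]
      nlinarith [sq_nonneg ((2 * α - 1) * x ^ 2 - 3 * (α - 1) * ε ^ 2)]
    linarith
end

section
/- Let α ∈ (0,2) and ε > 0, and let ψ_ε : ℝ → ℝ be defined by ψ_ε(x) = |x| for |x| ≥ ε and ψ_ε(x) = 3ε/8 + (3/(4ε))x² − (1/(8ε³))x⁴ for |x| ≤ ε. Then for every r ≥ 0 one has 1 − (α/2) · r ψ_ε'(r) / ψ_ε(r) ≥ a, where a = (3/8) · min{1, 2 − α}. (Consequently, for the radial vector field H(x) = x on ℝ^N with weight w_ε(x) = ψ_ε(|x|)^α, the quantity 1 − (α/2) ψ_ε(|x|)^{−1} x·∇(ψ_ε∘|·|)(x) is bounded below by a at every x ∈ ℝ^N.) -/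
/-!
On `|r| ≤ ε` the quotient `r ψ_ε'(r) / ψ_ε(r)` equals `4r²(3ε² - r²) / (3ε⁴ + 6ε²r² - r⁴)`,
which lies in `[0, 1]` because the denominator minus the numerator is `3(ε² - r²)²`; for
`r ≥ ε` it is `1`. Hence `1 - (α/2) r ψ_ε'/ψ_ε ≥ 1 - α/2 = (2 - α)/2 ≥ (3/8) min{1, 2 - α}`.
-/

open Set

noncomputable def psiInner (ε x : ℝ) : ℝ :=
  3 * ε / 8 + 3 / (4 * ε) * x ^ 2 - 1 / (8 * ε ^ 3) * x ^ 4

lemma hasDerivAt_psiInner (ε x : ℝ) :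
    HasDerivAt (psiInner ε) (3 / (2 * ε) * x - 1 / (2 * ε ^ 3) * x ^ 3) x := by
  have h : HasDerivAt (psiInner ε)
      (3 / (4 * ε) * (2 * x ^ 1) - 1 / (8 * ε ^ 3) * (4 * x ^ 3)) x :=
    (((hasDerivAt_pow 2 x).const_mul _).const_add _).sub ((hasDerivAt_pow 4 x).const_mul _)
  exact h.congr_deriv (by ring)

lemma psiInner_eq_div {ε : ℝ} (hε : ε ≠ 0) (x : ℝ) :
    psiInner ε x = (3 * ε ^ 4 + 6 * ε ^ 2 * x ^ 2 - x ^ 4) / (8 * ε ^ 3) := by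
  unfold psiInner
  field_simp
  ring

lemma psiInner_of_sq_eq {ε x : ℝ} (hε : ε ≠ 0) (hx : x ^ 2 = ε ^ 2) : psiInner ε x = ε := by
  have hx4 : x ^ 4 = ε ^ 4 := by rw [show x ^ 4 = (x ^ 2) ^ 2 by ring, hx]; ring
  rw [psiInner_eq_div hε, hx, hx4]
  field_simp
  ring

lemma psi_of_le_abs {ε x : ℝ} (h : ε ≤ |x|) : psi ε x = |x| := if_pos h

lemma psi_of_abs_le {ε x : ℝ} (hε : ε ≠ 0) (h : |x| ≤ ε) : psi ε x = psiInner ε x := by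
  rcases h.lt_or_eq with h | h
  · exact if_neg h.not_ge
  · rw [psi_of_le_abs h.ge, h, psiInner_of_sq_eq hε (by rw [← sq_abs, h])]

lemma hasDerivAt_psi_of_abs_lt {ε x : ℝ} (hε : ε ≠ 0) (h : |x| < ε) :
    HasDerivAt (psi ε) (3 / (2 * ε) * x - 1 / (2 * ε ^ 3) * x ^ 3) x := by
  refine (hasDerivAt_psiInner ε x).congr_of_eventuallyEq ?_
  filter_upwards [(isOpen_lt continuous_abs continuous_const).mem_nhds h] with y hy
  exact psi_of_abs_le hε hy.le

lemma psi_of_le {ε x : ℝ} (hε : 0 < ε) (h : ε ≤ x) : psi ε x = x := by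
  rw [psi_of_le_abs (h.trans (le_abs_self x)), abs_of_pos (hε.trans_le h)]

lemma hasDerivAt_psi_of_le {ε x : ℝ} (hε : 0 < ε) (h : ε ≤ x) : HasDerivAt (psi ε) 1 x := by
  rcases h.lt_or_eq with h | rfl
  · refine (hasDerivAt_id x).congr_of_eventuallyEq ?_
    filter_upwards [eventually_gt_nhds h] with y hy using psi_of_le hε hy.le
  -- at the junction `ψ_ε` is `C¹`: both one-sided pieces have slope `1`
  have hright : HasDerivWithinAt (psi ε) 1 (Ici ε) ε :=
    (hasDerivAt_id ε).hasDerivWithinAt.congr (fun y hy => psi_of_le hε hy) (psi_of_le hε le_rfl)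
  have hleft : HasDerivWithinAt (psi ε) 1 (Iic ε) ε := by
    have hinner := hasDerivAt_psiInner ε ε
    rw [show 3 / (2 * ε) * ε - 1 / (2 * ε ^ 3) * ε ^ 3 = 1 by field_simp; ring] at hinner
    refine hinner.hasDerivWithinAt.congr_of_eventuallyEq ?_
      (psi_of_abs_le hε.ne' (abs_of_pos hε).le)
    filter_upwards [nhdsWithin_le_nhds (eventually_gt_nhds (neg_lt_self hε)),
      self_mem_nhdsWithin] with y hy hyε
    exact psi_of_abs_le hε.ne' (abs_le.mpr ⟨hy.le, hyε⟩)
  simpa only [Iic_union_Ici, hasDerivWithinAt_univ] using hleft.union hright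

lemma mul_deriv_psi_div_psi_mem_Icc {ε r : ℝ} (hε : 0 < ε) (hr : 0 ≤ r) :
    r * deriv (psi ε) r / psi ε r ∈ Icc 0 1 := by
  rcases lt_or_ge r ε with h | h
  · have habs : |r| < ε := by rwa [abs_of_nonneg hr]
    have hc : (0 : ℝ) < 8 * ε ^ 3 := by positivity
    have hr2 : r ^ 2 ≤ ε ^ 2 := pow_le_pow_left₀ hr h.le 2
    have hnum : r * (3 / (2 * ε) * r - 1 / (2 * ε ^ 3) * r ^ 3)
        = 4 * r ^ 2 * (3 * ε ^ 2 - r ^ 2) / (8 * ε ^ 3) := by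
      field_simp
      ring
    rw [(hasDerivAt_psi_of_abs_lt hε.ne' habs).deriv, psi_of_abs_le hε.ne' habs.le,
      psiInner_eq_div hε.ne', hnum, div_div_div_cancel_right₀ hc.ne']
    have hden : 0 < 3 * ε ^ 4 + 6 * ε ^ 2 * r ^ 2 - r ^ 4 := by
      nlinarith [pow_pos hε 4, mul_nonneg (sq_nonneg ε) (sq_nonneg r)]
    refine ⟨div_nonneg (by nlinarith [sq_nonneg r]) hden.le, (div_le_one hden).mpr ?_⟩
    nlinarith [sq_nonneg (ε ^ 2 - r ^ 2)]
  · rw [(hasDerivAt_psi_of_le hε h).deriv, psi_of_le hε h, mul_one,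
      div_self (hε.trans_le h).ne']
    exact right_mem_Icc.mpr zero_le_one

lemma three_eighths_min_le_one_sub_mul {α q : ℝ} (hα : α ∈ Ioo (0 : ℝ) 2)
    (hq : q ∈ Icc (0 : ℝ) 1) :
    3 / 8 * min 1 (2 - α) ≤ 1 - α / 2 * q := by
  have hmin : min 1 (2 - α) ≤ 2 - α := min_le_right _ _
  nlinarith [mul_le_of_le_one_right hα.1.le hq.2, hα.2]

/-- For every `r ≥ 0`, `1 - (α/2) · r ψ_ε'(r) / ψ_ε(r) ≥ (3/8) min{1, 2 - α}`. -/
theorem radial_multiplier_lower_bound (α ε : ℝ) (hα : α ∈ Set.Ioo (0 : ℝ) 2)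
    (hε : 0 < ε) :
    ∀ r : ℝ, 0 ≤ r →
      1 - α / 2 * (r * deriv (psi ε) r / psi ε r) ≥ 3 / 8 * min 1 (2 - α) :=
  fun _ hr => three_eighths_min_le_one_sub_mul hα (mul_deriv_psi_div_psi_mem_Icc hε hr)
end
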